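/- arXiv:1502.02317 — 7 statements merged into one kernel-verified Lean document; each statement's English description precedes it below -/
import Mathlib

section
/- Let A = [[η, -1], [1, 0]] with |η| > Λ for a sufficiently large absolute constant Λ, and let C = {(x,y) ∈ ℝ² : x ≠ 0, |y| ≤ ε|x|} for a suitable small absolute constant ε > 0. Then for every X ∈ C, the vector A·X lies in C and ‖A·X‖ ≥ (2/3)|η|·‖X‖. -/
open Real

noncomputable def vnorm (x : Fin 2 → ℝ) : ℝ := Real.sqrt (x 0 ^ 2 + x 1 ^ 2)

/-! For `X = (x, y)` in the cone, `A X = (η x - y, x)` with `|η x - y| ≥ (|η| - ε)|x|`. So the new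
first coordinate dominates the new second one `x` as soon as `ε (|η| - ε) ≥ 1`, and it dominates
`c ‖X‖ ≤ c (1 + ε)|x|` as soon as `c (1 + ε) ≤ |η| - ε`. With `ε = 1/4` and `c = (2/3)|η|` both hold
for `|η| > 5`. -/

lemma abs_le_vnorm (x : Fin 2 → ℝ) : |x 0| ≤ vnorm x :=
  Real.abs_le_sqrt (le_add_of_nonneg_right (sq_nonneg _))

lemma vnorm_le_abs_add_abs (x : Fin 2 → ℝ) : vnorm x ≤ |x 0| + |x 1| := by
  refine Real.sqrt_le_iff.mpr ⟨by positivity, ?_⟩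
  nlinarith [sq_abs (x 0), sq_abs (x 1), abs_nonneg (x 0), abs_nonneg (x 1)]

lemma transfer_mulVec (η : ℝ) (X : Fin 2 → ℝ) :
    (!![η, -1; 1, 0] : Matrix (Fin 2) (Fin 2) ℝ).mulVec X = ![η * X 0 - X 1, X 0] := by
  ext i
  fin_cases i <;> simp [Matrix.mulVec, dotProduct, Fin.sum_univ_two, sub_eq_add_neg]

lemma sub_abs_mul_le_abs_mul_sub {η x y ε : ℝ} (hy : |y| ≤ ε * |x|) :
    (|η| - ε) * |x| ≤ |η * x - y| :=
  calc (|η| - ε) * |x| ≤ |η * x| - |y| := by rw [abs_mul]; linarith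
    _ ≤ |η * x - y| := abs_sub_abs_le_abs_sub _ _

lemma transfer_mulVec_mem_cone {η ε : ℝ} (hε : 0 ≤ ε) (hη : 1 ≤ ε * (|η| - ε))
    {X : Fin 2 → ℝ} (hx : X 0 ≠ 0) (hy : |X 1| ≤ ε * |X 0|) :
    (!![η, -1; 1, 0] : Matrix (Fin 2) (Fin 2) ℝ).mulVec X 0 ≠ 0 ∧
      |(!![η, -1; 1, 0] : Matrix (Fin 2) (Fin 2) ℝ).mulVec X 1| ≤
        ε * |(!![η, -1; 1, 0] : Matrix (Fin 2) (Fin 2) ℝ).mulVec X 0| := by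
  have hx : 0 < |X 0| := abs_pos.mpr hx
  have hdom : |X 0| ≤ ε * |η * X 0 - X 1| :=
    calc |X 0| ≤ ε * (|η| - ε) * |X 0| := le_mul_of_one_le_left hx.le hη
      _ ≤ ε * |η * X 0 - X 1| := by
        rw [mul_assoc]; exact mul_le_mul_of_nonneg_left (sub_abs_mul_le_abs_mul_sub hy) hε
  simp only [transfer_mulVec, Matrix.cons_val_zero, Matrix.cons_val_one]
  refine ⟨fun h => ?_, hdom⟩
  rw [h, abs_zero, mul_zero] at hdom
  linarith

lemma le_vnorm_transfer_mulVec {η ε c : ℝ} (hc : 0 ≤ c)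
    (hη : c * (1 + ε) ≤ |η| - ε) {X : Fin 2 → ℝ} (hy : |X 1| ≤ ε * |X 0|) :
    c * vnorm X ≤ vnorm ((!![η, -1; 1, 0] : Matrix (Fin 2) (Fin 2) ℝ).mulVec X) := by
  calc c * vnorm X ≤ c * ((1 + ε) * |X 0|) := by
        gcongr; linarith [vnorm_le_abs_add_abs X]
    _ ≤ (|η| - ε) * |X 0| := by rw [← mul_assoc]; gcongr
    _ ≤ |η * X 0 - X 1| := sub_abs_mul_le_abs_mul_sub hy
    _ ≤ _ := by
        rw [transfer_mulVec]; exact abs_le_vnorm ![_, _]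

/-- There exist absolute constants `ε ∈ (0,1)` and `Λ > 0` such that for every
`η` with `|η| > Λ`, the matrix `A = [[η, -1], [1, 0]]` maps the cone
`C = {(x,y) : x ≠ 0, |y| ≤ ε |x|}` into itself and expands norms by at least `(2/3)|η|`. -/
theorem stmt_0 :
    ∃ ε : ℝ, 0 < ε ∧ ε < 1 ∧ ∃ Λ : ℝ, 0 < Λ ∧
      ∀ η : ℝ, |η| > Λ →
        ∀ X : Fin 2 → ℝ, X 0 ≠ 0 → |X 1| ≤ ε * |X 0| →
          (((!![η, -1; 1, 0] : Matrix (Fin 2) (Fin 2) ℝ).mulVec X) 0 ≠ 0 ∧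
            |((!![η, -1; 1, 0] : Matrix (Fin 2) (Fin 2) ℝ).mulVec X) 1| ≤
              ε * |((!![η, -1; 1, 0] : Matrix (Fin 2) (Fin 2) ℝ).mulVec X) 0| ∧
            vnorm ((!![η, -1; 1, 0] : Matrix (Fin 2) (Fin 2) ℝ).mulVec X) ≥
              (2 / 3) * |η| * vnorm X) := by
  refine ⟨1 / 4, by norm_num, by norm_num, 5, by norm_num, fun η hη X hx hy => ?_⟩
  obtain ⟨hAx, hcone⟩ :=
    transfer_mulVec_mem_cone (η := η) (by norm_num) (by linarith) hx hy
  exact ⟨hAx, hcone, le_vnorm_transfer_mulVec (by positivity) (by linarith) hy⟩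
end

section
/- Let D = [[a,b],[c,d]] ∈ SL(2,ℝ) with ‖D‖ ≤ C₀. If the angle between D·(1,0)ᵀ and (0,1)ᵀ (as lines in ℝP¹) is greater than κ ∈ (0,1), then |a| ≥ (1/10)·C₀⁻¹·κ. -/
open Real

/-- The operator norm of a 2×2 matrix, as the supremum of images of unit vectors. -/
noncomputable def opNorm2 (A : Matrix (Fin 2) (Fin 2) ℝ) : ℝ :=
  ⨆ θ : ℝ, vnorm (A.mulVec ![Real.cos θ, Real.sin θ])

/-- The argument of a planar vector. -/
noncomputable def argOf (x : Fin 2 → ℝ) : ℝ := Complex.arg (x 0 + x 1 * Complex.I)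

/-- The projective angle between (the lines spanned by) two vectors: the distance of the
difference of arguments to `πℤ`. -/
noncomputable def pangle (x y : Fin 2 → ℝ) : ℝ :=
  ‖((argOf x - argOf y : ℝ) : AddCircle (π : ℝ))‖

/-!
Hadamard's inequality `|det D| ≤ ‖De₁‖ ‖De₂‖` together with `‖De₂‖ ≤ ‖D‖ ≤ C₀` gives
`‖De₁‖ ≥ C₀⁻¹` when `det D = 1`. In polar form `a = ‖De₁‖ cos (arg De₁)`, and
`|cos (arg De₁)| = sin ∠(De₁, e₂)` because `e₂` has argument `π/2`. Jordan's inequality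
`sin x ≥ 2x/π` on `[0, π/2]` then yields `|a| ≥ (2/π) C₀⁻¹ κ`, and `2/π > 1/10`.
-/

lemma vnorm_nonneg (v : Fin 2 → ℝ) : 0 ≤ vnorm v := Real.sqrt_nonneg _

lemma bddAbove_range_vnorm_mulVec (A : Matrix (Fin 2) (Fin 2) ℝ) :
    BddAbove (Set.range fun θ => vnorm (A.mulVec ![cos θ, sin θ])) := by
  refine ⟨√(A 0 0 ^ 2 + A 0 1 ^ 2 + (A 1 0 ^ 2 + A 1 1 ^ 2)), ?_⟩
  rintro _ ⟨θ, rfl⟩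
  have hpyth := sin_sq_add_cos_sq θ
  refine Real.sqrt_le_sqrt ?_
  simp only [Matrix.mulVec, dotProduct, Fin.sum_univ_two, Matrix.cons_val_zero,
    Matrix.cons_val_one]
  nlinarith [sq_nonneg (A 0 0 * sin θ - A 0 1 * cos θ),
    sq_nonneg (A 1 0 * sin θ - A 1 1 * cos θ)]

lemma vnorm_col_one_le_opNorm2 (A : Matrix (Fin 2) (Fin 2) ℝ) :
    vnorm (fun i => A i 1) ≤ opNorm2 A := by
  have hcol : A.mulVec ![cos (π / 2), sin (π / 2)] = fun i => A i 1 := by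
    ext i; simp [Matrix.mulVec, dotProduct, Fin.sum_univ_two]
  rw [opNorm2]
  simpa only [hcol] using le_ciSup (bddAbove_range_vnorm_mulVec A) (π / 2)

lemma abs_det_le_vnorm_col_mul_vnorm_col (A : Matrix (Fin 2) (Fin 2) ℝ) :
    |A.det| ≤ vnorm (fun i => A i 0) * vnorm (fun i => A i 1) := by
  rw [vnorm, vnorm, ← Real.sqrt_mul (by positivity)]
  refine Real.abs_le_sqrt ?_
  have lagrange : (A 0 0 ^ 2 + A 1 0 ^ 2) * (A 0 1 ^ 2 + A 1 1 ^ 2)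
      = A.det ^ 2 + (A 0 0 * A 0 1 + A 1 0 * A 1 1) ^ 2 := by
    rw [Matrix.det_fin_two]; ring
  rw [lagrange]
  exact le_add_of_nonneg_right (sq_nonneg _)

lemma one_le_vnorm_col_zero_mul_opNorm2 {A : Matrix (Fin 2) (Fin 2) ℝ} (hdet : A.det = 1) :
    1 ≤ vnorm (fun i => A i 0) * opNorm2 A := by
  have hprod := abs_det_le_vnorm_col_mul_vnorm_col A
  rw [hdet, abs_one] at hprod
  exact hprod.trans (mul_le_mul_of_nonneg_left (vnorm_col_one_le_opNorm2 A) (vnorm_nonneg _))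

lemma opNorm2_pos_of_det_eq_one {A : Matrix (Fin 2) (Fin 2) ℝ} (hdet : A.det = 1) :
    0 < opNorm2 A :=
  pos_of_mul_pos_right (one_pos.trans_le (one_le_vnorm_col_zero_mul_opNorm2 hdet))
    (vnorm_nonneg _)

lemma inv_le_vnorm_col_zero_of_det_eq_one {A : Matrix (Fin 2) (Fin 2) ℝ} {C : ℝ}
    (hdet : A.det = 1) (hnorm : opNorm2 A ≤ C) : C⁻¹ ≤ vnorm (fun i => A i 0) := by
  rw [inv_le_iff_one_le_mul₀ ((opNorm2_pos_of_det_eq_one hdet).trans_le hnorm)]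
  exact (one_le_vnorm_col_zero_mul_opNorm2 hdet).trans
    (mul_le_mul_of_nonneg_left hnorm (vnorm_nonneg _))

lemma abs_sin_eq_sin_norm_addCircle (x : ℝ) : |sin x| = sin ‖(x : AddCircle π)‖ := by
  have hle : ‖(x : AddCircle π)‖ ≤ π := by
    have := AddCircle.norm_le_half_period π (x := (x : AddCircle π)) pi_ne_zero
    rw [abs_of_pos pi_pos] at this
    linarith [pi_pos]
  rw [AddCircle.norm_eq] at hle ⊢
  rw [← abs_sin_eq_sin_abs_of_abs_le_pi hle, mul_comm π⁻¹, ← div_eq_mul_inv,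
    sin_sub_int_mul_pi, abs_mul, abs_neg_one_zpow, one_mul]

lemma argOf_zero_one : argOf ![0, 1] = π / 2 := by
  simp [argOf, Complex.arg_I]

lemma abs_zero_eq_vnorm_mul_sin_pangle (v : Fin 2 → ℝ) :
    |v 0| = vnorm v * sin (pangle v ![0, 1]) := by
  have hnorm : ‖(v 0 : ℂ) + v 1 * Complex.I‖ = vnorm v := Complex.norm_add_mul_I _ _
  have hre := Complex.norm_mul_cos_arg ((v 0 : ℂ) + v 1 * Complex.I)
  rw [hnorm] at hre
  simp only [Complex.add_re, Complex.ofReal_re, Complex.mul_re, Complex.ofReal_im,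
    Complex.I_re, Complex.I_im, mul_zero, zero_mul, sub_zero, add_zero] at hre
  rw [pangle, argOf_zero_one, ← abs_sin_eq_sin_norm_addCircle, sin_sub_pi_div_two, abs_neg, argOf]
  conv_lhs => rw [← hre]
  rw [abs_mul, abs_of_nonneg (vnorm_nonneg v)]

lemma pangle_nonneg (v w : Fin 2 → ℝ) : 0 ≤ pangle v w := norm_nonneg _

lemma pangle_le_pi_div_two (v w : Fin 2 → ℝ) : pangle v w ≤ π / 2 := by
  rw [pangle]
  simpa only [abs_of_pos pi_pos] using
    AddCircle.norm_le_half_period π (x := ((argOf v - argOf w : ℝ) : AddCircle π)) pi_ne_zero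

theorem two_div_pi_mul_inv_mul_pangle_le_abs {A : Matrix (Fin 2) (Fin 2) ℝ} {C : ℝ}
    (hdet : A.det = 1) (hnorm : opNorm2 A ≤ C) :
    2 / π * C⁻¹ * pangle (A.mulVec ![1, 0]) ![0, 1] ≤ |A 0 0| := by
  have hcol : A.mulVec ![1, 0] = fun i => A i 0 := by
    ext i; simp [Matrix.mulVec, dotProduct, Fin.sum_univ_two]
  rw [hcol]
  set p := pangle (fun i => A i 0) ![0, 1]
  have hp : 0 ≤ p := pangle_nonneg _ _
  have hjordan : 2 / π * p ≤ sin p := mul_le_sin hp (pangle_le_pi_div_two _ _)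
  have hinv := inv_le_vnorm_col_zero_of_det_eq_one hdet hnorm
  rw [abs_zero_eq_vnorm_mul_sin_pangle (fun i => A i 0)]
  calc 2 / π * C⁻¹ * p = C⁻¹ * (2 / π * p) := by ring
    _ ≤ vnorm (fun i => A i 0) * sin p :=
      mul_le_mul hinv hjordan (by positivity)
        (vnorm_nonneg _)

theorem stmt_1_general (a b c d C₀ κ : ℝ)
    (hdet : (!![a, b; c, d] : Matrix (Fin 2) (Fin 2) ℝ).det = 1)
    (hnorm : opNorm2 !![a, b; c, d] ≤ C₀)
    (hangle : pangle ((!![a, b; c, d] : Matrix (Fin 2) (Fin 2) ℝ).mulVec ![1, 0]) ![0, 1] > κ) :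
    |a| ≥ (1 / 10) * C₀⁻¹ * κ := by
  have hbound := two_div_pi_mul_inv_mul_pangle_le_abs hdet hnorm
  set p := pangle ((!![a, b; c, d] : Matrix (Fin 2) (Fin 2) ℝ).mulVec ![1, 0]) ![0, 1]
  have hC : 0 ≤ C₀⁻¹ := inv_nonneg.2 ((opNorm2_pos_of_det_eq_one hdet).trans_le hnorm).le
  have hp : 0 ≤ p := pangle_nonneg _ _
  have hconst : 1 / 10 ≤ 2 / π := by
    rw [div_le_div_iff₀ (by norm_num) pi_pos]; linarith [pi_lt_four]
  calc (1 / 10) * C₀⁻¹ * κ ≤ (1 / 10) * C₀⁻¹ * p := by gcongr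
    _ ≤ 2 / π * C₀⁻¹ * p := by gcongr
    _ ≤ |a| := by simpa using hbound

/-- if `D = [[a,b],[c,d]] ∈ SL(2,ℝ)` with `‖D‖ ≤ C₀` and the projective angle
between `D(1,0)ᵀ` and `(0,1)ᵀ` exceeds `κ ∈ (0,1)`, then `|a| ≥ (1/10) C₀⁻¹ κ`. -/
theorem stmt_1 (a b c d C₀ κ : ℝ)
    (hdet : (!![a, b; c, d] : Matrix (Fin 2) (Fin 2) ℝ).det = 1)
    (hnorm : opNorm2 !![a, b; c, d] ≤ C₀)
    (hκ0 : 0 < κ) (hκ1 : κ < 1)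
    (hangle : pangle ((!![a, b; c, d] : Matrix (Fin 2) (Fin 2) ℝ).mulVec ![1, 0]) ![0, 1] > κ) :
    |a| ≥ (1 / 10) * C₀⁻¹ * κ :=
  stmt_1_general a b c d C₀ κ hdet hnorm hangle
end

section
/- Let λ₀, λ₁ ≥ λ̄, let D = [[a,b],[c,d]] ∈ SL(2,ℝ) with ‖D‖ ≤ C₀, and suppose |a| ≥ (1/(10C₀))·κ with κ > λ̄^{-1/4}. Set A = diag(λ₁, λ₁⁻¹)·D·diag(λ₀, λ₀⁻¹). Then tr(A) = λ₀λ₁a + λ₀⁻¹λ₁⁻¹d, and if λ̄ is larger than a constant depending only on C₀, then |tr(A)| > 2, hence A is hyperbolic (A ∈ SL(2,ℝ) \ SO(2,ℝ) with |tr A| > 2). -/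
open Real

lemma opNorm2_ge_d (a b c d : ℝ) : |d| ≤ opNorm2 !![a, b; c, d] := by
  have hf : ∀ θ : ℝ, vnorm ((!![a, b; c, d]).mulVec ![Real.cos θ, Real.sin θ])
      = Real.sqrt ((a * Real.cos θ + b * Real.sin θ)^2 + (c * Real.cos θ + d * Real.sin θ)^2) := by
    intro θ
    simp [vnorm, Matrix.mulVec, dotProduct, Fin.sum_univ_two]
  have hbdd : BddAbove (Set.range fun θ : ℝ =>
      vnorm ((!![a, b; c, d]).mulVec ![Real.cos θ, Real.sin θ])) := by
    refine ⟨Real.sqrt ((|a|+|b|)^2 + (|c|+|d|)^2), ?_⟩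
    rintro y ⟨θ, rfl⟩
    dsimp only
    rw [hf]
    apply Real.sqrt_le_sqrt
    have h1 : |a * Real.cos θ + b * Real.sin θ| ≤ |a| + |b| := by
      calc |a * Real.cos θ + b * Real.sin θ| ≤ |a * Real.cos θ| + |b * Real.sin θ| := abs_add_le _ _
        _ ≤ |a| * 1 + |b| * 1 := by
            rw [abs_mul, abs_mul]
            gcongr <;> [exact Real.abs_cos_le_one θ; exact Real.abs_sin_le_one θ]
        _ = |a| + |b| := by ring
    have h2 : |c * Real.cos θ + d * Real.sin θ| ≤ |c| + |d| := by
      calc |c * Real.cos θ + d * Real.sin θ| ≤ |c * Real.cos θ| + |d * Real.sin θ| := abs_add_le _ _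
        _ ≤ |c| * 1 + |d| * 1 := by
            rw [abs_mul, abs_mul]
            gcongr <;> [exact Real.abs_cos_le_one θ; exact Real.abs_sin_le_one θ]
        _ = |c| + |d| := by ring
    have e1 : (a * Real.cos θ + b * Real.sin θ)^2 ≤ (|a| + |b|)^2 := by
      rw [← sq_abs]; exact pow_le_pow_left₀ (abs_nonneg _) h1 2
    have e2 : (c * Real.cos θ + d * Real.sin θ)^2 ≤ (|c| + |d|)^2 := by
      rw [← sq_abs]; exact pow_le_pow_left₀ (abs_nonneg _) h2 2
    linarith
  have key : vnorm ((!![a, b; c, d]).mulVec ![Real.cos (π/2), Real.sin (π/2)]) ≤ opNorm2 !![a, b; c, d] :=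
    le_ciSup hbdd (π/2)
  calc |d| = Real.sqrt (d^2) := (Real.sqrt_sq_eq_abs d).symm
    _ ≤ Real.sqrt ((a * Real.cos (π/2) + b * Real.sin (π/2))^2 + (c * Real.cos (π/2) + d * Real.sin (π/2))^2) := by
        apply Real.sqrt_le_sqrt
        rw [Real.cos_pi_div_two, Real.sin_pi_div_two]
        nlinarith [sq_nonneg b]
    _ = vnorm ((!![a, b; c, d]).mulVec ![Real.cos (π/2), Real.sin (π/2)]) := (hf _).symm
    _ ≤ opNorm2 !![a, b; c, d] := key

/-- with `A = diag(λ₁,λ₁⁻¹) D diag(λ₀,λ₀⁻¹)`, `D = [[a,b],[c,d]] ∈ SL(2,ℝ)`,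
`‖D‖ ≤ C₀`, `|a| ≥ κ/(10C₀)`, `κ > λ̄^(-1/4)`, `λ₀, λ₁ ≥ λ̄`: the trace of `A` is
`λ₀λ₁ a + λ₀⁻¹λ₁⁻¹ d`, and if `λ̄` exceeds a constant depending only on `C₀` then
`|tr A| > 2`, so `A` is hyperbolic. -/
theorem stmt_2 :
    ∀ C₀ : ℝ, 1 ≤ C₀ → ∃ Λ : ℝ, 0 < Λ ∧
      ∀ lam lam0 lam1 a b c d κ : ℝ,
        Λ ≤ lam → lam ≤ lam0 → lam ≤ lam1 →
        (!![a, b; c, d] : Matrix (Fin 2) (Fin 2) ℝ).det = 1 →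
        opNorm2 !![a, b; c, d] ≤ C₀ →
        0 < κ → κ < 1 → κ > lam ^ (-(1/4 : ℝ)) →
        |a| ≥ (1 / (10 * C₀)) * κ →
        (Matrix.trace ((!![lam1, 0; 0, lam1⁻¹] : Matrix (Fin 2) (Fin 2) ℝ) * !![a, b; c, d] *
              !![lam0, 0; 0, lam0⁻¹]) = lam0 * lam1 * a + lam0⁻¹ * lam1⁻¹ * d ∧
          |Matrix.trace ((!![lam1, 0; 0, lam1⁻¹] : Matrix (Fin 2) (Fin 2) ℝ) * !![a, b; c, d] *
              !![lam0, 0; 0, lam0⁻¹])| > 2) := by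
  intro C₀ hC₀
  refine ⟨10 * C₀ * (2 + C₀) + 1, by nlinarith, ?_⟩
  intro lam lam0 lam1 a b c d κ hΛ h0 h1 hdet hop hκ0 hκ1 hκlam ha
  have htr : Matrix.trace ((!![lam1, 0; 0, lam1⁻¹] : Matrix (Fin 2) (Fin 2) ℝ) * !![a, b; c, d] *
      !![lam0, 0; 0, lam0⁻¹]) = lam0 * lam1 * a + lam0⁻¹ * lam1⁻¹ * d := by
    simp [Matrix.trace_fin_two, Matrix.mul_apply, Fin.sum_univ_two]
    ring
  refine ⟨htr, ?_⟩
  rw [htr]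
  have hC₀0 : (0 : ℝ) < C₀ := by linarith
  have hlam1' : (1 : ℝ) ≤ lam := by nlinarith
  have hlam0pos : 0 < lam := by linarith
  have hd : |d| ≤ C₀ := (opNorm2_ge_d a b c d).trans hop
  -- main term lower bound
  have hκa : lam^(2:ℝ) * κ / (10 * C₀) ≤ lam0 * lam1 * |a| := by
    have h2 : lam^(2:ℝ) = lam * lam := by
      rw [show (2:ℝ) = (2:ℕ) by norm_num, Real.rpow_natCast]; ring
    rw [h2]
    have hl0 : 0 < lam0 := hlam0pos.trans_le h0
    have hl1 : 0 < lam1 := hlam0pos.trans_le h1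
    have h1' : κ / (10 * C₀) ≤ |a| := by
      have : κ / (10 * C₀) = 1 / (10 * C₀) * κ := by ring
      linarith [ha, this.ge, this.le]
    have s1 : lam * lam * (κ / (10 * C₀)) ≤ lam0 * lam1 * (κ / (10 * C₀)) := by
      have hll : lam * lam ≤ lam0 * lam1 := by nlinarith
      exact mul_le_mul_of_nonneg_right hll (by positivity)
    have s2 : lam0 * lam1 * (κ / (10 * C₀)) ≤ lam0 * lam1 * |a| :=
      mul_le_mul_of_nonneg_left h1' (by positivity)
    have heq : lam * lam * κ / (10 * C₀) = lam * lam * (κ / (10 * C₀)) := by ring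
    linarith [heq.le, heq.ge]
  have hκbig : lam ^ ((7:ℝ)/4) < lam^(2:ℝ) * κ := by
    have h := hκlam
    have : lam ^ ((7:ℝ)/4) = lam^(2:ℝ) * lam ^ (-(1/4:ℝ)) := by
      rw [← Real.rpow_add hlam0pos]; norm_num
    rw [this]
    have hp : (0:ℝ) < lam^(2:ℝ) := Real.rpow_pos_of_pos hlam0pos 2
    exact (mul_lt_mul_iff_right₀ hp).mpr h
  have hge : lam ≤ lam ^ ((7:ℝ)/4) := by
    nth_rewrite 1 [← Real.rpow_one lam]
    exact Real.rpow_le_rpow_of_exponent_le hlam1' (by norm_num)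
  -- |main term| > 2 + |small term|
  have hmain : lam / (10 * C₀) ≤ lam0 * lam1 * |a| := by
    have : lam / (10 * C₀) ≤ lam^(2:ℝ) * κ / (10 * C₀) := by
      apply div_le_div_of_nonneg_right _ (by positivity)
      exact le_trans (hge.trans hκbig.le) (le_refl _)
    linarith [hκa]
  have hsmall : |lam0⁻¹ * lam1⁻¹ * d| ≤ C₀ := by
    rw [abs_mul, abs_mul, abs_inv, abs_inv, abs_of_pos (by linarith : (0:ℝ) < lam0),
        abs_of_pos (by linarith : (0:ℝ) < lam1)]
    have h0' : (1:ℝ) ≤ lam0 := by linarith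
    have h1'' : (1:ℝ) ≤ lam1 := by linarith
    have : lam0⁻¹ ≤ 1 := inv_le_one_of_one_le₀ h0'
    have : lam1⁻¹ ≤ 1 := inv_le_one_of_one_le₀ h1''
    calc lam0⁻¹ * lam1⁻¹ * |d| ≤ 1 * 1 * C₀ := by
          gcongr <;> first | assumption | positivity | exact abs_nonneg d
      _ = C₀ := by ring
  have hlamval : 10 * C₀ * (2 + C₀) < lam := by linarith
  have hmain2 : 2 + C₀ < lam0 * lam1 * |a| := by
    have : 2 + C₀ < lam / (10 * C₀) := by
      rw [lt_div_iff₀ (by positivity)]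
      nlinarith
    linarith
  calc (2:ℝ) < lam0 * lam1 * |a| - C₀ := by linarith
    _ ≤ |lam0 * lam1 * a| - |lam0⁻¹ * lam1⁻¹ * d| := by
        rw [abs_mul]
        have hl0 : 0 < lam0 := hlam0pos.trans_le h0
        have hl1 : 0 < lam1 := hlam0pos.trans_le h1
        have : |lam0 * lam1| = lam0 * lam1 := abs_of_pos (mul_pos hl0 hl1)
        rw [this]
        linarith [hsmall]
    _ ≤ |lam0 * lam1 * a + lam0⁻¹ * lam1⁻¹ * d| := by
        have := abs_sub_abs_le_abs_sub (lam0 * lam1 * a) (-(lam0⁻¹ * lam1⁻¹ * d))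
        simp only [abs_neg, sub_neg_eq_add] at this
        linarith
end

section
/- Let A ∈ SL(2,ℝ) be hyperbolic with singular value decomposition A = R_u · diag(λ(A), λ(A)⁻¹) · R_{π/2 − s}, λ(A) > 1, where R_θ denotes rotation by θ. Write A = diag(λ₁,λ₁⁻¹)·D·diag(λ₀,λ₀⁻¹) with ‖D‖ ≤ C₀, min(λ₀,λ₁) ≥ λ̄, and ∠(D(1,0)ᵀ,(0,1)ᵀ) > κ > λ̄^{-1/4}. Then, for λ̄ large depending only on C₀, both |π/2 − s|_{ℝ/πℤ} and |u|_{ℝ/πℤ} are bounded by C·C₀⁴·λ̄⁻²·κ⁻² for an absolute constant C. -/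
open Real

/-- distance from `x` to `πℤ` -/
noncomputable def pdist (x : ℝ) : ℝ := ‖((x : ℝ) : AddCircle (π : ℝ))‖

/-- rotation by `θ` -/
noncomputable def Rot (θ : ℝ) : Matrix (Fin 2) (Fin 2) ℝ :=
  !![Real.cos θ, -Real.sin θ; Real.sin θ, Real.cos θ]

/-- `diag(l, l⁻¹)` -/
noncomputable def Dg (l : ℝ) : Matrix (Fin 2) (Fin 2) ℝ := !![l, 0; 0, l⁻¹]

/-! Compare the two factorisations of `A` entrywise. From `A = R_u diag(λ_A, λ_A⁻¹) R_{π/2 - s}`,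
the second column of `A` has squared norm `λ_A² cos² s + λ_A⁻² sin² s`, and the Frobenius norm
gives `λ_A² ≥ A₀₀² - 2`; so `cos² s (A₀₀² - 2) ≤ |A e₂|²`. From
`A = diag(λ₁, λ₁⁻¹) D diag(λ₀, λ₀⁻¹)`, `|A e₂| = O(C₀ λ₁ / λ₀)`, while `A₀₀ = λ₁ λ₀ D₀₀` with
`|D₀₀| ≥ 2κ / (π C₀)` by the angle condition and `det D = 1`; the hypothesis `κ > λ̄^(-1/4)`
makes `A₀₀² ≥ 4` once `λ̄ ≥ π² C₀²`. Hence `cos² s ≤ π² C₀⁴ κ⁻² λ₀⁻⁴`, and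
`|π/2 - s|_{ℝ/πℤ} ≤ (π/2) |cos s|`. Transposing both factorisations turns the bound on `s` into
the bound on `u`. -/

theorem pdist_le_pi_div_two_mul_abs_sin (x : ℝ) : pdist x ≤ π / 2 * |sin x| := by
  set y := x - round (π⁻¹ * x) * π
  have hy : |y| ≤ π / 2 := by
    simpa [AddCircle.norm_eq, abs_of_pos pi_pos] using
      AddCircle.norm_le_half_period π (x := (x : AddCircle π)) pi_ne_zero
  have hsin : |sin x| = sin |y| := by
    rw [← abs_sin_eq_sin_abs_of_abs_le_pi (by linarith [pi_pos]), sin_sub_int_mul_pi, abs_mul,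
      abs_neg_one_zpow, one_mul]
  rw [pdist, AddCircle.norm_eq, hsin]
  calc |y| = π / 2 * (2 / π * |y|) := by field_simp
    _ ≤ π / 2 * sin |y| := by gcongr; exact mul_le_sin (abs_nonneg y) hy

theorem pangle_mul_vnorm_le (x : Fin 2 → ℝ) : pangle x ![0, 1] * vnorm x ≤ π / 2 * |x 0| := by
  set z : ℂ := x 0 + x 1 * Complex.I
  have hz : ‖z‖ = vnorm x := by
    rw [vnorm, Complex.norm_def, Complex.normSq_apply]; simp [z, sq]
  have hangle : pangle x ![0, 1] = pdist (Complex.arg z - π / 2) := by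
    simp [pangle, pdist, argOf, z, Complex.arg_I]
  have hsin : |sin (Complex.arg z - π / 2)| = |cos (Complex.arg z)| := by
    rw [sin_sub_pi_div_two, abs_neg]
  calc pangle x ![0, 1] * vnorm x ≤ π / 2 * |cos (Complex.arg z)| * ‖z‖ := by
        rw [hz, hangle, ← hsin]
        exact mul_le_mul_of_nonneg_right (pdist_le_pi_div_two_mul_abs_sin _) (sqrt_nonneg _)
    _ = π / 2 * |x 0| := by
        rw [mul_assoc, ← abs_norm z, ← abs_mul, mul_comm (cos _), Complex.norm_mul_cos_arg]
        simp [z]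

theorem vnorm_mulVec_cos_sin_le (D : Matrix (Fin 2) (Fin 2) ℝ) (θ : ℝ) :
    vnorm (D.mulVec ![cos θ, sin θ]) ≤ √(D 0 0 ^ 2 + D 0 1 ^ 2 + D 1 0 ^ 2 + D 1 1 ^ 2) := by
  refine sqrt_le_sqrt ?_
  simp only [Matrix.mulVec, dotProduct, Fin.sum_univ_two, Matrix.cons_val_zero,
    Matrix.cons_val_one]
  nlinarith [sin_sq_add_cos_sq θ, sq_nonneg (D 0 0 * sin θ - D 0 1 * cos θ),
    sq_nonneg (D 1 0 * sin θ - D 1 1 * cos θ)]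

theorem vnorm_mulVec_le_opNorm2 (D : Matrix (Fin 2) (Fin 2) ℝ) (θ : ℝ) :
    vnorm (D.mulVec ![cos θ, sin θ]) ≤ opNorm2 D :=
  le_ciSup ⟨_, Set.forall_mem_range.2 (vnorm_mulVec_cos_sin_le D)⟩ θ

theorem col_sq_add_sq_le_of_opNorm2_le {D : Matrix (Fin 2) (Fin 2) ℝ} {C : ℝ} (hD : opNorm2 D ≤ C)
    (j : Fin 2) : D 0 j ^ 2 + D 1 j ^ 2 ≤ C ^ 2 := by
  refine (sqrt_le_iff.1 ?_).2
  fin_cases j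
  · simpa [vnorm, Matrix.mulVec, dotProduct] using (vnorm_mulVec_le_opNorm2 D 0).trans hD
  · simpa [vnorm, Matrix.mulVec, dotProduct] using (vnorm_mulVec_le_opNorm2 D (π / 2)).trans hD

theorem det_sq_le_col_sq_mul_col_sq (D : Matrix (Fin 2) (Fin 2) ℝ) :
    D.det ^ 2 ≤ (D 0 0 ^ 2 + D 1 0 ^ 2) * (D 0 1 ^ 2 + D 1 1 ^ 2) := by
  rw [Matrix.det_fin_two]
  nlinarith [sq_nonneg (D 0 0 * D 0 1 + D 1 0 * D 1 1)]

theorem Rot_transpose (θ : ℝ) : (Rot θ).transpose = Rot (-θ) := by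
  ext i j; fin_cases i <;> fin_cases j <;> simp [Rot]

theorem Dg_transpose (l : ℝ) : (Dg l).transpose = Dg l := by
  ext i j; fin_cases i <;> fin_cases j <;> simp [Dg]

theorem Rot_mul_Dg_mul_Rot_pi_div_two_sub (u a s : ℝ) :
    Rot u * Dg a * Rot (π / 2 - s) =
      !![a * cos u * sin s - a⁻¹ * sin u * cos s, -(a * cos u * cos s) - a⁻¹ * sin u * sin s;
        a * sin u * sin s + a⁻¹ * cos u * cos s, a⁻¹ * cos u * sin s - a * sin u * cos s] := by
  ext i j
  fin_cases i <;> fin_cases j <;>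
    simp [Rot, Dg, Matrix.mul_apply, cos_pi_div_two_sub, sin_pi_div_two_sub] <;> ring

theorem cos_sq_mul_sub_two_le {a u s : ℝ} {M : Matrix (Fin 2) (Fin 2) ℝ} (ha : 1 < a)
    (hM : Rot u * Dg a * Rot (π / 2 - s) = M) :
    cos s ^ 2 * (M 0 0 ^ 2 - 2) ≤ M 0 1 ^ 2 + M 1 1 ^ 2 := by
  have hb : a⁻¹ ^ 2 ≤ 1 := pow_le_one₀ (by positivity) (inv_le_one_of_one_le₀ ha.le)
  have hab : a⁻¹ ^ 2 ≤ a ^ 2 := by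
    gcongr
    exact (inv_le_one_of_one_le₀ ha.le).trans ha.le
  have hcols : M 0 0 ^ 2 + M 1 0 ^ 2 = a ^ 2 * sin s ^ 2 + a⁻¹ ^ 2 * cos s ^ 2 ∧
      M 0 1 ^ 2 + M 1 1 ^ 2 = a ^ 2 * cos s ^ 2 + a⁻¹ ^ 2 * sin s ^ 2 := by
    simp only [← hM, Rot_mul_Dg_mul_Rot_pi_div_two_sub, Matrix.of_apply, Matrix.cons_val',
      Matrix.cons_val_zero, Matrix.cons_val_one, Matrix.empty_val', Matrix.cons_val_fin_one]
    exact ⟨by linear_combination (a ^ 2 * sin s ^ 2 + a⁻¹ ^ 2 * cos s ^ 2) * sin_sq_add_cos_sq u,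
      by linear_combination (a ^ 2 * cos s ^ 2 + a⁻¹ ^ 2 * sin s ^ 2) * sin_sq_add_cos_sq u⟩
  calc cos s ^ 2 * (M 0 0 ^ 2 - 2)
      ≤ cos s ^ 2 * (a ^ 2 * sin s ^ 2 + a⁻¹ ^ 2 * cos s ^ 2 - 2) := by
        gcongr; nlinarith [sq_nonneg (M 1 0)]
    _ ≤ a ^ 2 * cos s ^ 2 + a⁻¹ ^ 2 * sin s ^ 2 := by
        rw [sin_sq s]
        nlinarith [mul_nonneg (sub_nonneg.2 hab) (pow_nonneg (sq_nonneg (cos s)) 2),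
          mul_nonneg (by linarith : (0:ℝ) ≤ 2 - a⁻¹ ^ 2) (sq_nonneg (cos s))]
    _ = M 0 1 ^ 2 + M 1 1 ^ 2 := hcols.2.symm

theorem Dg_mul_mul_Dg (l₁ l₀ : ℝ) (D : Matrix (Fin 2) (Fin 2) ℝ) :
    Dg l₁ * D * Dg l₀ =
      !![l₁ * l₀ * D 0 0, l₁ / l₀ * D 0 1; l₀ / l₁ * D 1 0, (l₁ * l₀)⁻¹ * D 1 1] := by
  ext i j
  fin_cases i <;> fin_cases j <;> simp [Dg, Matrix.mul_apply, Matrix.vecMul, dotProduct] <;> ring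

theorem cos_sq_mul_pow_four_le {a u s l₀ l₁ δ C : ℝ} {D : Matrix (Fin 2) (Fin 2) ℝ}
    (ha : 1 < a) (hl₀ : 0 < l₀) (hl₁ : 1 ≤ l₁) (hd : δ ^ 2 ≤ D 0 0 ^ 2)
    (hD01 : D 0 1 ^ 2 ≤ C ^ 2) (hD11 : D 1 1 ^ 2 ≤ C ^ 2) (hgap : 4 ≤ (l₁ * l₀ * δ) ^ 2)
    (h : Rot u * Dg a * Rot (π / 2 - s) = Dg l₁ * D * Dg l₀) :
    cos s ^ 2 * l₀ ^ 4 * δ ^ 2 ≤ 4 * C ^ 2 := by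
  have key := cos_sq_mul_sub_two_le ha h
  simp only [Dg_mul_mul_Dg, Matrix.of_apply, Matrix.cons_val', Matrix.cons_val_zero,
    Matrix.cons_val_one, Matrix.empty_val', Matrix.cons_val_fin_one] at key
  have hl₁0 : 0 < l₁ := by linarith
  have hgap' : (l₁ * l₀ * δ) ^ 2 / 2 ≤ (l₁ * l₀ * D 0 0) ^ 2 - 2 := by
    have : (l₁ * l₀ * δ) ^ 2 ≤ (l₁ * l₀ * D 0 0) ^ 2 := by
      rw [mul_pow, mul_pow _ (D 0 0)]; gcongr
    linarith
  have hcols : (l₁ / l₀ * D 0 1) ^ 2 + ((l₁ * l₀)⁻¹ * D 1 1) ^ 2 ≤ 2 * C ^ 2 * (l₁ / l₀) ^ 2 := by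
    have : ((l₁ * l₀)⁻¹) ^ 2 ≤ (l₁ / l₀) ^ 2 := by
      rw [mul_inv, div_eq_mul_inv]; gcongr
      exact (inv_le_one_of_one_le₀ hl₁).trans hl₁
    rw [mul_pow, mul_pow _ (D 1 1)]
    nlinarith [mul_le_mul this hD11 (sq_nonneg _) (sq_nonneg _),
      mul_le_mul_of_nonneg_left hD01 (sq_nonneg (l₁ / l₀))]
  calc cos s ^ 2 * l₀ ^ 4 * δ ^ 2
      = cos s ^ 2 * ((l₁ * l₀ * δ) ^ 2 / 2) * (2 * (l₀ / l₁) ^ 2) := by field_simp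
    _ ≤ 2 * C ^ 2 * (l₁ / l₀) ^ 2 * (2 * (l₀ / l₁) ^ 2) := by
        refine mul_le_mul_of_nonneg_right ?_ (by positivity)
        exact ((mul_le_mul_of_nonneg_left hgap' (sq_nonneg _)).trans key).trans hcols
    _ = 4 * C ^ 2 := by field_simp; ring

theorem sin_sq_mul_pow_four_le {a u s l₀ l₁ δ C : ℝ} {D : Matrix (Fin 2) (Fin 2) ℝ}
    (ha : 1 < a) (hl₁ : 0 < l₁) (hl₀ : 1 ≤ l₀) (hd : δ ^ 2 ≤ D 0 0 ^ 2)
    (hD10 : D 1 0 ^ 2 ≤ C ^ 2) (hD11 : D 1 1 ^ 2 ≤ C ^ 2) (hgap : 4 ≤ (l₀ * l₁ * δ) ^ 2)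
    (h : Rot u * Dg a * Rot (π / 2 - s) = Dg l₁ * D * Dg l₀) :
    sin u ^ 2 * l₁ ^ 4 * δ ^ 2 ≤ 4 * C ^ 2 := by
  have ht : Rot (s - π / 2) * Dg a * Rot (π / 2 - (π / 2 + u)) =
      Dg l₀ * D.transpose * Dg l₁ := by
    have := congrArg Matrix.transpose h
    simp only [Matrix.transpose_mul, Rot_transpose, Dg_transpose, ← mul_assoc] at this
    rwa [show π / 2 - (π / 2 + u) = -u by ring, show s - π / 2 = -(π / 2 - s) by ring]
  have hu : cos (π / 2 + u) ^ 2 = sin u ^ 2 := by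
    rw [cos_add, cos_pi_div_two, sin_pi_div_two]; ring
  rw [← hu]
  exact cos_sq_mul_pow_four_le (D := D.transpose) ha hl₁ hl₀ hd hD10 hD11 hgap ht

theorem sq_le_apply_zero_zero_sq_of_lt_pangle {D : Matrix (Fin 2) (Fin 2) ℝ} {κ C : ℝ}
    (hκ : 0 < κ) (hC : 0 < C) (hdet : D.det = 1) (hD : opNorm2 D ≤ C)
    (hang : κ < pangle (D.mulVec ![1, 0]) ![0, 1]) :
    (2 * κ / (π * C)) ^ 2 ≤ D 0 0 ^ 2 := by
  have hcol : D.mulVec ![1, 0] = ![D 0 0, D 1 0] := by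
    ext i; fin_cases i <;> simp [Matrix.mulVec, dotProduct]
  have hv : vnorm ![D 0 0, D 1 0] ^ 2 = D 0 0 ^ 2 + D 1 0 ^ 2 := by
    rw [vnorm]; exact sq_sqrt (add_nonneg (sq_nonneg _) (sq_nonneg _))
  have hdet' : 1 ≤ (D 0 0 ^ 2 + D 1 0 ^ 2) * C ^ 2 := by
    have := det_sq_le_col_sq_mul_col_sq D
    rw [hdet, one_pow] at this
    exact this.trans
      (mul_le_mul_of_nonneg_left (col_sq_add_sq_le_of_opNorm2_le hD 1) (by positivity))
  have hκv : κ * vnorm ![D 0 0, D 1 0] ≤ π / 2 * |D 0 0| := by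
    rw [hcol] at hang
    exact (mul_le_mul_of_nonneg_right hang.le (sqrt_nonneg _)).trans (pangle_mul_vnorm_le _)
  have hκv2 : κ ^ 2 * (D 0 0 ^ 2 + D 1 0 ^ 2) ≤ (π / 2) ^ 2 * D 0 0 ^ 2 := by
    rw [← hv, ← sq_abs (D 0 0), ← mul_pow, ← mul_pow]
    exact pow_le_pow_left₀ (mul_nonneg hκ.le (sqrt_nonneg _)) hκv 2
  rw [div_pow, div_le_iff₀ (by positivity)]
  nlinarith [mul_le_mul_of_nonneg_left hdet' (sq_nonneg κ)]

theorem one_lt_pow_four_mul_of_rpow_lt {lam κ : ℝ} (hlam : 0 < lam)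
    (h : lam ^ (-(1 / 4 : ℝ)) < κ) : 1 < κ ^ 4 * lam := by
  have h4 : (lam ^ (-(1 / 4 : ℝ))) ^ 4 = lam⁻¹ := by
    rw [← rpow_natCast, ← rpow_mul hlam.le]; norm_num [rpow_neg_one]
  have := pow_lt_pow_left₀ h (rpow_nonneg hlam.le _) four_ne_zero
  rw [h4, inv_lt_iff_one_lt_mul₀ hlam] at this
  linarith

theorem four_le_sq_mul_mul_div {lam l₀ l₁ κ C : ℝ} (hC : 0 < C) (hΛ : π ^ 2 * C ^ 2 ≤ lam)
    (hlam : 1 ≤ lam) (hl₀ : lam ≤ l₀) (hl₁ : lam ≤ l₁) (hκ : 0 < κ) (hκ1 : κ < 1)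
    (hκlam : 1 < κ ^ 4 * lam) : 4 ≤ (l₁ * l₀ * (2 * κ / (π * C))) ^ 2 := by
  have hκ4 : κ ^ 4 ≤ κ ^ 2 := pow_le_pow_of_le_one hκ.le hκ1.le (by norm_num)
  have hlam4 : π ^ 2 * C ^ 2 ≤ κ ^ 2 * lam ^ 4 := by
    have : lam ≤ lam ^ 3 := le_self_pow₀ hlam (by norm_num)
    nlinarith [mul_le_mul_of_nonneg_right hκ4 (by positivity : (0 : ℝ) ≤ lam ^ 4),
      mul_le_mul_of_nonneg_right hκlam.le (by positivity : (0 : ℝ) ≤ lam ^ 3)]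
  calc (4 : ℝ) ≤ 4 * (κ ^ 2 * lam ^ 4) / (π ^ 2 * C ^ 2) := by
        rw [le_div_iff₀ (by positivity)]; linarith
    _ = (lam * lam * (2 * κ / (π * C))) ^ 2 := by field_simp; ring
    _ ≤ (l₁ * l₀ * (2 * κ / (π * C))) ^ 2 := by gcongr; linarith

theorem pdist_le_of_sin_sq_mul_le {w lam l κ C : ℝ} (hC : 1 ≤ C) (hκ : 0 < κ) (hκ1 : κ < 1)
    (hlam : 0 < lam) (hl : lam ≤ l) (h : sin w ^ 2 * l ^ 4 * (2 * κ / (π * C)) ^ 2 ≤ 4 * C ^ 2) :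
    pdist w ≤ 5 * C ^ 4 * lam⁻¹ ^ 2 * κ⁻¹ ^ 2 := by
  have hl0 : 0 < l := hlam.trans_le hl
  have hsin : |sin w| ≤ π * C ^ 2 / (κ * lam ^ 2) := by
    refine abs_le_of_sq_le_sq ?_ (by positivity)
    calc sin w ^ 2 ≤ 4 * C ^ 2 / (l ^ 4 * (2 * κ / (π * C)) ^ 2) := by
          rw [le_div_iff₀ (by positivity), ← mul_assoc]; exact h
      _ = (π * C ^ 2 / (κ * l ^ 2)) ^ 2 := by field_simp; ring
      _ ≤ (π * C ^ 2 / (κ * lam ^ 2)) ^ 2 := by gcongr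
  have hπ : π ^ 2 ≤ 10 := by nlinarith [pi_pos, pi_lt_d2]
  have hC2 : C ^ 2 ≤ C ^ 4 := pow_le_pow_right₀ hC (by norm_num)
  have hκ2 : κ⁻¹ ≤ κ⁻¹ ^ 2 := le_self_pow₀ (one_le_inv₀ hκ |>.2 hκ1.le) (by norm_num)
  calc pdist w ≤ π / 2 * |sin w| := pdist_le_pi_div_two_mul_abs_sin w
    _ ≤ π / 2 * (π * C ^ 2 / (κ * lam ^ 2)) := by gcongr
    _ = π ^ 2 / 2 * C ^ 2 * lam⁻¹ ^ 2 * κ⁻¹ := by field_simp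
    _ ≤ 5 * C ^ 4 * lam⁻¹ ^ 2 * κ⁻¹ ^ 2 := by gcongr; linarith

/-- if the hyperbolic matrix `A = R_u diag(λA, λA⁻¹) R_{π/2 - s}` (with `λA > 1`)
can be written `A = diag(λ₁,λ₁⁻¹) D diag(λ₀,λ₀⁻¹)` with `‖D‖ ≤ C₀`, `min(λ₀,λ₁) ≥ λ̄` and
`∠(D(1,0)ᵀ,(0,1)ᵀ) > κ > λ̄^(-1/4)`, then for `λ̄` large depending only on `C₀`, both
`|π/2 − s|_{ℝ/πℤ}` and `|u|_{ℝ/πℤ}` are at most `C C₀⁴ λ̄⁻² κ⁻²` for an absolute constant `C`. -/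
theorem stmt_4 :
    ∃ C : ℝ, 0 < C ∧ ∀ C₀ : ℝ, 1 ≤ C₀ → ∃ Λ : ℝ, 0 < Λ ∧
      ∀ lam lam0 lam1 κ u s lamA : ℝ, ∀ D : Matrix (Fin 2) (Fin 2) ℝ,
        Λ ≤ lam → lam ≤ lam0 → lam ≤ lam1 →
        D.det = 1 → opNorm2 D ≤ C₀ →
        0 < κ → κ < 1 → κ > lam ^ (-(1/4 : ℝ)) →
        pangle (D.mulVec ![1, 0]) ![0, 1] > κ →
        lamA > 1 →
        Rot u * Dg lamA * Rot (π / 2 - s) = Dg lam1 * D * Dg lam0 →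
        (pdist (π / 2 - s) ≤ C * C₀ ^ 4 * lam⁻¹ ^ 2 * κ⁻¹ ^ 2 ∧
          pdist u ≤ C * C₀ ^ 4 * lam⁻¹ ^ 2 * κ⁻¹ ^ 2) := by
  refine ⟨5, by norm_num, fun C₀ hC₀ => ⟨π ^ 2 * C₀ ^ 2, by positivity, ?_⟩⟩
  intro lam lam0 lam1 κ u s lamA D hΛ h0 h1 hdet hD hκ hκ1 hκlam hang hA h
  have hC₀' : 0 < C₀ := by linarith
  have hlam : 1 ≤ lam := hΛ.trans' (one_le_mul_of_one_le_of_one_le (by nlinarith [pi_gt_three])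
    (one_le_pow₀ hC₀))
  have hκ4 := one_lt_pow_four_mul_of_rpow_lt (by linarith) hκlam
  have hd := sq_le_apply_zero_zero_sq_of_lt_pangle hκ hC₀' hdet hD hang
  have hD01 := le_of_add_le_of_nonneg_left (col_sq_add_sq_le_of_opNorm2_le hD 1) (sq_nonneg _)
  have hD11 := le_of_add_le_of_nonneg_right (col_sq_add_sq_le_of_opNorm2_le hD 1) (sq_nonneg _)
  have hD10 := le_of_add_le_of_nonneg_right (col_sq_add_sq_le_of_opNorm2_le hD 0) (sq_nonneg _)
  constructor
  · refine pdist_le_of_sin_sq_mul_le hC₀ hκ hκ1 (by linarith) h0 ?_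
    rw [sin_pi_div_two_sub]
    exact cos_sq_mul_pow_four_le hA (by linarith) (by linarith) hd hD01 hD11
      (four_le_sq_mul_mul_div hC₀' hΛ hlam h0 h1 hκ hκ1 hκ4) h
  · exact pdist_le_of_sin_sq_mul_le hC₀ hκ hκ1 (by linarith) h1
      (sin_sq_mul_pow_four_le hA (by linarith) (by linarith) hd hD10 hD11
        (four_le_sq_mul_mul_div hC₀' hΛ hlam h1 h0 hκ hκ1 hκ4) h)
end

section
/- For Γ ≠ 0 let a(Γ) = (1/2)(Γ² + 2 + √(Γ⁴+4Γ²)) be the squared norm of A = [[Γ,−1],[1,0]], and let u(Γ) ∈ (0,π) (mod π) be the direction of the unstable (most expanded image) singular direction, characterized by Γ·cot u = a − 1. Then (−1/sin²u)·(du/dΓ) = 1/2 + Γ²/(2√(Γ⁴+4Γ²)) > 1/2; in particular du/dΓ ≤ −(1/2)sin²u < 0, so the unstable direction moves monotonically in Γ with definite speed. -/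
/-!
Differentiating `Γ cot u = a − 1` gives `cot u − Γ u' / sin² u = a'`, and eliminating `cot u`
with the identity itself yields `−u' / sin² u = (Γ a' − (a − 1)) / Γ²`. With
`a' = Γ + (Γ³ + 2Γ) / √(Γ⁴ + 4Γ²)` and `√(Γ⁴ + 4Γ²)² = Γ⁴ + 4Γ²` the right-hand side
simplifies to `1/2 + Γ² / (2√(Γ⁴ + 4Γ²))`.
-/

open Real

/-- `a(Γ) = ‖A(Γ)‖²` for the transfer matrix `A(Γ) = [[Γ,−1],[1,0]]`. -/
noncomputable def aOf (Γ : ℝ) : ℝ := (1 / 2) * (Γ ^ 2 + 2 + Real.sqrt (Γ ^ 4 + 4 * Γ ^ 2))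

open Filter Topology

theorem HasDerivAt.cos_div_sin {f : ℝ → ℝ} {f' x : ℝ} (hf : HasDerivAt f f' x)
    (hx : Real.sin (f x) ≠ 0) :
    HasDerivAt (fun y => Real.cos (f y) / Real.sin (f y)) (-f' / Real.sin (f x) ^ 2) x := by
  refine (hf.cos.fun_div hf.sin hx).congr_deriv ?_
  field_simp
  linear_combination (-f') * sin_sq_add_cos_sq (f x)

theorem HasDerivAt.eq_of_mul_cot_eventuallyEq {u g : ℝ → ℝ} {u' g' x : ℝ}
    (hu : HasDerivAt u u' x) (hg : HasDerivAt g g' x) (hx : x ≠ 0)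
    (hs : Real.sin (u x) ≠ 0)
    (h : (fun y => y * (Real.cos (u y) / Real.sin (u y))) =ᶠ[𝓝 x] g) :
    u' = -Real.sin (u x) ^ 2 * ((x * g' - g x) / x ^ 2) := by
  have hderiv : Real.cos (u x) / Real.sin (u x) + x * (-u' / Real.sin (u x) ^ 2) = g' := by
    simpa using (((hasDerivAt_id x).mul (hu.cos_div_sin hs)).congr_of_eventuallyEq h.symm).unique hg
  have hval : x * (Real.cos (u x) / Real.sin (u x)) = g x := h.eq_of_nhds
  rw [← hderiv, ← hval]
  field_simp
  ring

theorem hasDerivAt_aOf {Γ : ℝ} (hΓ : Γ ≠ 0) :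
    HasDerivAt aOf (Γ + (Γ ^ 3 + 2 * Γ) / √(Γ ^ 4 + 4 * Γ ^ 2)) Γ := by
  have hD : Γ ^ 4 + 4 * Γ ^ 2 ≠ 0 := by positivity
  have hroot := ((hasDerivAt_pow 4 Γ).fun_add ((hasDerivAt_pow 2 Γ).const_mul 4)).sqrt hD
  refine ((((hasDerivAt_pow 2 Γ).add_const 2).fun_add hroot).const_mul (1 / 2)).congr_deriv ?_
  field_simp
  ring

theorem mul_deriv_aOf_sub_aOf {Γ : ℝ} (hΓ : Γ ≠ 0) :
    Γ * (Γ + (Γ ^ 3 + 2 * Γ) / √(Γ ^ 4 + 4 * Γ ^ 2)) - (aOf Γ - 1) =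
      Γ ^ 2 * (1 / 2 + Γ ^ 2 / (2 * √(Γ ^ 4 + 4 * Γ ^ 2))) := by
  have hD : 0 < Γ ^ 4 + 4 * Γ ^ 2 := by positivity
  have hsq := sq_sqrt hD.le
  have hpos := sqrt_pos.2 hD
  rw [aOf]
  set r := √(Γ ^ 4 + 4 * Γ ^ 2)
  field_simp
  linear_combination (-1) * hsq

theorem one_half_lt_one_half_add_div_sqrt {Γ : ℝ} (hΓ : Γ ≠ 0) :
    1 / 2 < 1 / 2 + Γ ^ 2 / (2 * √(Γ ^ 4 + 4 * Γ ^ 2)) := by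
  have : 0 < Γ ^ 2 / (2 * √(Γ ^ 4 + 4 * Γ ^ 2)) := by positivity
  linarith

/-- let `u(Γ)` be a differentiable choice of the unstable singular direction,
characterized by `Γ cot u = a − 1` (with `sin u ≠ 0`). Then for `Γ ≠ 0`,
`du/dΓ = −sin²(u) (1/2 + Γ²/(2√(Γ⁴+4Γ²)))`, the factor `1/2 + Γ²/(2√(Γ⁴+4Γ²))` exceeds `1/2`,
and in particular `du/dΓ ≤ −(1/2) sin²(u) < 0`. -/
theorem stmt_9 (u : ℝ → ℝ)
    (hdiff : ∀ Γ : ℝ, Γ ≠ 0 → DifferentiableAt ℝ u Γ)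
    (hsin : ∀ Γ : ℝ, Γ ≠ 0 → Real.sin (u Γ) ≠ 0)
    (hchar : ∀ Γ : ℝ, Γ ≠ 0 → Γ * (Real.cos (u Γ) / Real.sin (u Γ)) = aOf Γ - 1) :
    ∀ Γ : ℝ, Γ ≠ 0 →
      deriv u Γ =
          -(Real.sin (u Γ)) ^ 2 * (1 / 2 + Γ ^ 2 / (2 * Real.sqrt (Γ ^ 4 + 4 * Γ ^ 2))) ∧
        1 / 2 + Γ ^ 2 / (2 * Real.sqrt (Γ ^ 4 + 4 * Γ ^ 2)) > 1 / 2 ∧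
        deriv u Γ ≤ -(1 / 2) * (Real.sin (u Γ)) ^ 2 ∧
        deriv u Γ < 0 := by
  intro Γ hΓ
  have hchar_nhds : (fun y => y * (Real.cos (u y) / Real.sin (u y))) =ᶠ[𝓝 Γ] fun y => aOf y - 1 :=
    (eventually_ne_nhds hΓ).mono hchar
  have hderiv : deriv u Γ =
      -Real.sin (u Γ) ^ 2 * (1 / 2 + Γ ^ 2 / (2 * √(Γ ^ 4 + 4 * Γ ^ 2))) := by
    rw [(hdiff Γ hΓ).hasDerivAt.eq_of_mul_cot_eventuallyEq ((hasDerivAt_aOf hΓ).sub_const 1) hΓ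
      (hsin Γ hΓ) hchar_nhds, mul_deriv_aOf_sub_aOf hΓ, mul_div_cancel_left₀ _ (pow_ne_zero 2 hΓ)]
  have hfactor := one_half_lt_one_half_add_div_sqrt hΓ
  have hsin_sq : 0 < Real.sin (u Γ) ^ 2 := by
    have := hsin Γ hΓ
    positivity
  have hle : deriv u Γ ≤ -(1 / 2) * Real.sin (u Γ) ^ 2 := by
    rw [hderiv]
    linarith [mul_le_mul_of_nonneg_left hfactor.le hsin_sq.le]
  exact ⟨hderiv, hfactor, hle, hle.trans_lt (by linarith)⟩
end

section
/- Suppose (Ω, T, μ) is an ergodic subshift over a finite alphabet, v: alphabet → ℝ a potential, and suppose there is a letter i such that for every N, μ({ω : ω₀ = ω₁ = ⋯ = ω_{N−1} = i}) > 0. Then the almost sure spectrum Σ_v of the associated ergodic Schrödinger operators contains the interval [−2 + v(i), 2 + v(i)]. -/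
/-!
If `E ∉ Σ_v`, some `ε`-ball around `E` misses `Σ_v`, so for every `ω` with `σ(H_ω) = Σ_v` the
self-adjointness of `H_ω` gives `ε ‖u‖ ≤ ‖(H_ω - E) u‖` for all `u`. When `|E - v(i)| ≤ 2` write
`E - v(i) = 2 cos θ`; on a block of `N` letters `i` the plane wave `n ↦ e^{inθ}` solves
`(H_ω u)_n = E u_n` inside the block, so its truncation `u` to the block has `‖u‖² = N`, while
`(H_ω - E) u` lives on the four sites next to the edges of the block and has norm at most `4`.
Since blocks of every length have positive measure, such an `ω` exists for every `N`, and
`N > 16 / ε²` is absurd.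
-/

open MeasureTheory Complex ComplexConjugate
open scoped InnerProductSpace

local notation "ℓ²" => lp (fun _ : ℤ => ℂ) 2

theorem lp.summable_norm_sq {ι : Type*} {E : ι → Type*} [∀ i, NormedAddCommGroup (E i)]
    (f : lp E 2) : Summable fun i => ‖f i‖ ^ 2 := by
  simpa using (lp.memℓp f).summable (by norm_num : 0 < (2 : ENNReal).toReal)

theorem lp.norm_sq_eq_sum_of_support_subset {ι : Type*} {E : ι → Type*}
    [∀ i, NormedAddCommGroup (E i)] (f : lp E 2) (s : Finset ι) (hf : ∀ i ∉ s, f i = 0) :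
    ‖f‖ ^ 2 = ∑ i ∈ s, ‖f i‖ ^ 2 := by
  have := lp.norm_rpow_eq_tsum (by norm_num : 0 < (2 : ENNReal).toReal) f
  simp only [ENNReal.toReal_ofNat, Real.rpow_two] at this
  rw [this, tsum_eq_sum fun i hi => by simp [hf i hi]]

theorem summable_conj_shift_mul_shift (f g : ℓ²) (j k : ℤ) :
    Summable fun n => conj (f (n + j)) * g (n + k) := by
  have hf := (Equiv.addRight j).summable_iff.2 (lp.summable_norm_sq f)
  have hg := (Equiv.addRight k).summable_iff.2 (lp.summable_norm_sq g)
  refine Summable.of_norm_bounded ((hf.add hg).div_const 2) fun n => ?_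
  simp only [norm_mul, RCLike.norm_conj, Function.comp_apply, Equiv.coe_addRight]
  nlinarith [sq_nonneg (‖f (n + j)‖ - ‖g (n + k)‖)]

theorem IsSelfAdjoint.norm_units_inv_le {A : Type*} [CStarAlgebra A] {u : Aˣ}
    (hu : IsSelfAdjoint (u : A)) {ε : ℝ} (hε : 0 < ε) (h : ∀ z ∈ spectrum ℂ (u : A), ε ≤ ‖z‖) :
    ‖(↑u⁻¹ : A)‖ ≤ ε⁻¹ := by
  have hinv : IsSelfAdjoint (↑u⁻¹ : A) := by
    rw [IsSelfAdjoint, ← Units.coe_star_inv]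
    congr 2
    exact Units.ext hu
  have hrad : spectralRadius ℂ (↑u⁻¹ : A) ≤ ENNReal.ofReal ε⁻¹ := by
    refine iSup₂_le fun z hz => ?_
    rw [← spectrum.map_inv, Set.mem_inv] at hz
    rw [← ENNReal.ofReal_coe_nnreal, coe_nnnorm]
    refine ENNReal.ofReal_le_ofReal ?_
    simpa using inv_anti₀ hε (h _ hz)
  rw [hinv.spectralRadius_eq_nnnorm, ← ENNReal.ofReal_coe_nnreal, coe_nnnorm] at hrad
  exact (ENNReal.ofReal_le_ofReal_iff (by positivity)).1 hrad

theorem IsSelfAdjoint.mul_norm_le_norm_apply_sub_smul {E : Type*} [NormedAddCommGroup E]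
    [InnerProductSpace ℂ E] [CompleteSpace E] {T : E →L[ℂ] E} (hT : IsSelfAdjoint T) {c ε : ℝ}
    (hε : 0 < ε) (h : ∀ z ∈ spectrum ℂ T, ε ≤ dist z c) (x : E) :
    ε * ‖x‖ ≤ ‖T x - (c : ℂ) • x‖ := by
  set R := T - algebraMap ℂ (E →L[ℂ] E) c
  have hRx : R x = T x - (c : ℂ) • x := by
    simp only [R, sub_apply, Algebra.algebraMap_eq_smul_one, smul_apply, one_apply_eq_self]
  have hR : IsSelfAdjoint R := hT.sub (.algebraMap _ (Complex.conj_ofReal c))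
  have hσR : ∀ z ∈ spectrum ℂ R, ε ≤ ‖z‖ := by
    rintro _ hz
    rw [← spectrum.sub_singleton_eq] at hz
    obtain ⟨t, ht, _, rfl, rfl⟩ := hz
    simpa [dist_eq_norm] using h t ht
  have hunit : IsUnit R := (spectrum.zero_notMem_iff ℂ).1 fun h0 => by
    simpa using (hσR 0 h0).trans_lt' hε
  obtain ⟨U, hU⟩ := hunit
  rw [← hU] at hR hσR hRx
  have hx : ‖x‖ ≤ ε⁻¹ * ‖(U : E →L[ℂ] E) x‖ := calc
    ‖x‖ = ‖(↑U⁻¹ : E →L[ℂ] E) ((U : E →L[ℂ] E) x)‖ := by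
      rw [← mul_apply_eq_comp, U.inv_mul, one_apply_eq_self]
    _ ≤ ‖(↑U⁻¹ : E →L[ℂ] E)‖ * ‖(U : E →L[ℂ] E) x‖ := ContinuousLinearMap.le_opNorm _ _
    _ ≤ ε⁻¹ * ‖(U : E →L[ℂ] E) x‖ :=
      mul_le_mul_of_nonneg_right (hR.norm_units_inv_le hε hσR) (norm_nonneg _)
  rw [← hRx]
  exact (le_inv_mul_iff₀ hε).1 hx

def IsSchrodinger (V : ℤ → ℝ) (T : ℓ² →L[ℂ] ℓ²) : Prop :=
  ∀ u : ℓ², ∀ n, (T u : ℤ → ℂ) n = u (n + 1) + u (n - 1) + V n * u n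

noncomputable def planeWave (θ : ℝ) (n : ℤ) : ℂ := exp (n * θ * I)

theorem norm_planeWave (θ : ℝ) (n : ℤ) : ‖planeWave θ n‖ = 1 := by
  simpa [planeWave] using norm_exp_ofReal_mul_I (n * θ)

theorem planeWave_add_one_add_planeWave_sub_one (θ : ℝ) (n : ℤ) :
    planeWave θ (n + 1) + planeWave θ (n - 1) = 2 * Real.cos θ * planeWave θ n := by
  simp only [planeWave, ofReal_cos, two_cos, add_mul, ← exp_add]
  push_cast
  ring_nf

noncomputable def truncatedPlaneWave (θ : ℝ) (N : ℕ) : ℓ² :=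
  ⟨(Set.Ico 0 (N : ℤ)).indicator (planeWave θ),
    (memℓp_zero ((Set.finite_Ico _ _).subset Set.support_indicator_subset)).of_exponent_ge
      zero_le⟩

theorem truncatedPlaneWave_apply (θ : ℝ) (N : ℕ) (n : ℤ) :
    (truncatedPlaneWave θ N : ℤ → ℂ) n = (Set.Ico 0 (N : ℤ)).indicator (planeWave θ) n := rfl

theorem norm_sq_truncatedPlaneWave (θ : ℝ) (N : ℕ) : ‖truncatedPlaneWave θ N‖ ^ 2 = N := by
  rw [lp.norm_sq_eq_sum_of_support_subset _ (Finset.Ico 0 (N : ℤ)) fun n hn => by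
    simp_all [truncatedPlaneWave_apply]]
  rw [Finset.sum_congr rfl fun n hn => by
    rw [truncatedPlaneWave_apply, Set.indicator_of_mem (by simpa using hn), norm_planeWave, one_pow]]
  simp

namespace IsSchrodinger

variable {V : ℤ → ℝ} {T : ℓ² →L[ℂ] ℓ²}

theorem isSelfAdjoint (hT : IsSchrodinger V T) : IsSelfAdjoint T := by
  refine LinearMap.IsSymmetric.isSelfAdjoint fun f g => sub_eq_zero.1 ?_
  set c : ℤ → ℂ := fun n => conj (f (n + 1)) * g n - conj (f n) * g (n + 1)
  have hc : Summable c := by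
    simpa using (summable_conj_shift_mul_shift f g 1 0).sub
      (summable_conj_shift_mul_shift f g 0 1)
  -- the defect of symmetry at `n` is a discrete derivative, which sums to zero
  have hdiff : ∀ n, ⟪(T f : ℤ → ℂ) n, g n⟫_ℂ - ⟪f n, (T g : ℤ → ℂ) n⟫_ℂ = c n - c (n - 1) := by
    intro n
    simp only [c, RCLike.inner_apply, hT f n, hT g n, map_add, map_mul, conj_ofReal, sub_add_cancel]
    ring
  simp only [ContinuousLinearMap.coe_coe, lp.inner_eq_tsum]
  have hTf : Summable fun n : ℤ => ⟪(T f : ℤ → ℂ) n, g n⟫_ℂ := lp.summable_inner (T f) g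
  have hTg : Summable fun n : ℤ => ⟪f n, (T g : ℤ → ℂ) n⟫_ℂ := lp.summable_inner f (T g)
  have hc' : Summable fun n => c (n - 1) := (Equiv.subRight (1 : ℤ)).summable_iff.2 hc
  have hshift : ∑' n, c (n - 1) = ∑' n, c n := (Equiv.subRight (1 : ℤ)).tsum_eq c
  rw [← hTf.tsum_sub hTg, tsum_congr hdiff, hc.tsum_sub hc', hshift, sub_self]

theorem norm_sq_apply_truncatedPlaneWave_sub_smul_le (hT : IsSchrodinger V T) {E c θ : ℝ}
    {N : ℕ} (hV : ∀ n ∈ Set.Ico 0 (N : ℤ), V n = c) (hθ : 2 * Real.cos θ = E - c) :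
    ‖T (truncatedPlaneWave θ N) - (E : ℂ) • truncatedPlaneWave θ N‖ ^ 2 ≤ 16 := by
  set u := truncatedPlaneWave θ N
  set χ : ℤ → ℂ := (Set.Ico 0 (N : ℤ)).indicator 1
  have hu : ∀ n, u n = χ n * planeWave θ n := fun n =>
    (truncatedPlaneWave_apply θ N n).trans
      (by simp only [χ, ← Set.indicator_mul_left, Pi.one_apply, one_mul])
  have hr : ∀ n, (T u - (E : ℂ) • u : ℓ²) n =
      (χ (n + 1) - χ n) * planeWave θ (n + 1) + (χ (n - 1) - χ n) * planeWave θ (n - 1) := by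
    intro n
    have hbulk :
        χ n * (planeWave θ (n + 1) + planeWave θ (n - 1) + (V n - E) * planeWave θ n) = 0 := by
      by_cases hn : n ∈ Set.Ico 0 (N : ℤ)
      · have hθ' : (2 * Real.cos θ : ℂ) = E - c := by exact_mod_cast hθ
        rw [planeWave_add_one_add_planeWave_sub_one, hV n hn, hθ']
        ring
      · simp [χ, hn]
    rw [lp.coeFn_sub, lp.coeFn_smul, Pi.sub_apply, Pi.smul_apply, hT, hu, hu, hu, smul_eq_mul]
    linear_combination hbulk
  have hjump : ∀ a b, ‖χ a - χ b‖ ≤ 1 := fun a b => by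
    simp only [χ, Set.indicator_apply]
    split_ifs <;> simp
  set s : Finset ℤ := {-1, 0, (N : ℤ) - 1, (N : ℤ)}
  have hflat : ∀ n ∉ s, χ (n + 1) = χ n ∧ χ (n - 1) = χ n := fun n hn => by
    simp only [s, Finset.mem_insert, Finset.mem_singleton, not_or] at hn
    simp only [χ, Set.indicator_apply, Set.mem_Ico]
    constructor <;> split_ifs <;> first | rfl | omega
  have hbound : ∀ n, ‖(T u - (E : ℂ) • u : ℓ²) n‖ ≤ 2 := fun n => by
    rw [hr]
    refine (norm_add_le _ _).trans ?_
    simp only [norm_mul, norm_planeWave, mul_one]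
    linarith [hjump (n + 1) n, hjump (n - 1) n]
  rw [lp.norm_sq_eq_sum_of_support_subset _ s fun n hn => by
    rw [hr, (hflat n hn).1, (hflat n hn).2]; simp]
  calc ∑ n ∈ s, ‖(T u - (E : ℂ) • u : ℓ²) n‖ ^ 2 ≤ ∑ _n ∈ s, (2 : ℝ) ^ 2 :=
        Finset.sum_le_sum fun n _ => pow_le_pow_left₀ (norm_nonneg _) (hbound n) 2
    _ ≤ 16 := by
        rw [Finset.sum_const, nsmul_eq_mul]
        have : (s.card : ℝ) ≤ 4 := by exact_mod_cast (Finset.card_le_four : s.card ≤ 4)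
        linarith

end IsSchrodinger

theorem stmt_12_general {A : Type*} [MeasurableSpace A]
    (μ : Measure (ℤ → A))
    (v : A → ℝ) (i : A)
    (hblocks : ∀ N : ℕ, 0 < μ {ω | ∀ n : ℤ, 0 ≤ n → n < N → ω n = i})
    (H : (ℤ → A) → lp (fun _ : ℤ => ℂ) 2 →L[ℂ] lp (fun _ : ℤ => ℂ) 2)
    (hH : ∀ ω : ℤ → A, ∀ u : lp (fun _ : ℤ => ℂ) 2, ∀ n : ℤ,
      (H ω u : ∀ _ : ℤ, ℂ) n = u (n + 1) + u (n - 1) + (v (ω n) : ℂ) * u n)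
    (Sv : Set ℂ)
    (hS : ∀ᵐ ω ∂μ, spectrum ℂ (H ω) = Sv) :
    ∀ E : ℝ, -2 + v i ≤ E → E ≤ 2 + v i → (E : ℂ) ∈ Sv := by
  intro E hE₁ hE₂
  by_contra hE
  have hgood : ∀ N : ℕ, ∃ ω : ℤ → A,
      (∀ n : ℤ, 0 ≤ n → n < N → ω n = i) ∧ spectrum ℂ (H ω) = Sv := fun N =>
    Measure.exists_mem_of_measure_ne_zero_of_ae (hblocks N).ne' (ae_restrict_of_ae hS)
  obtain ⟨ω₀, -, hω₀⟩ := hgood 0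
  obtain ⟨ε, hε, hball⟩ := Metric.mem_nhds_iff.1
    ((hω₀ ▸ spectrum.isClosed (H ω₀)).isOpen_compl.mem_nhds hE)
  obtain ⟨N, hN⟩ := exists_nat_gt (16 / ε ^ 2)
  obtain ⟨ω, hωi, hωS⟩ := hgood N
  obtain ⟨θ, hθ⟩ : ∃ θ, 2 * Real.cos θ = E - v i :=
    ⟨Real.arccos ((E - v i) / 2), by rw [Real.cos_arccos (by linarith) (by linarith)]; ring⟩
  have hHω : IsSchrodinger (fun n => v (ω n)) (H ω) := hH ω
  have hsep : ∀ z ∈ spectrum ℂ (H ω), ε ≤ dist z E := fun z hz =>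
    not_lt.1 fun h => hball h (hωS ▸ hz)
  have hlower := hHω.isSelfAdjoint.mul_norm_le_norm_apply_sub_smul hε hsep
    (truncatedPlaneWave θ N)
  have hupper := hHω.norm_sq_apply_truncatedPlaneWave_sub_smul_le
    (fun n hn => congrArg v (hωi n hn.1 hn.2)) hθ
  have hsq := pow_le_pow_left₀ (by positivity) hlower 2
  rw [mul_pow, norm_sq_truncatedPlaneWave] at hsq
  rw [div_lt_iff₀ (by positivity)] at hN
  linarith

/-- for an ergodic subshift with a letter `i` such that arbitrarily long constant
`i`-blocks have positive measure, the almost sure spectrum of the associated ergodic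
Schrödinger operators contains `[−2 + v(i), 2 + v(i)]`. -/
theorem stmt_12 {A : Type*} [Fintype A] [MeasurableSpace A]
    (μ : Measure (ℤ → A)) [IsProbabilityMeasure μ]
    (hshift : Ergodic (fun ω (n : ℤ) => ω (n + 1)) μ)
    (v : A → ℝ) (i : A)
    (hblocks : ∀ N : ℕ, 0 < μ {ω | ∀ n : ℤ, 0 ≤ n → n < N → ω n = i})
    (H : (ℤ → A) → lp (fun _ : ℤ => ℂ) 2 →L[ℂ] lp (fun _ : ℤ => ℂ) 2)
    (hH : ∀ ω : ℤ → A, ∀ u : lp (fun _ : ℤ => ℂ) 2, ∀ n : ℤ,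
      (H ω u : ∀ _ : ℤ, ℂ) n = u (n + 1) + u (n - 1) + (v (ω n) : ℂ) * u n)
    (Sv : Set ℂ)
    (hS : ∀ᵐ ω ∂μ, spectrum ℂ (H ω) = Sv) :
    ∀ E : ℝ, -2 + v i ≤ E → E ≤ 2 + v i → (E : ℂ) ∈ Sv :=
  stmt_12_general μ v i hblocks H hH Sv hS
end

section
/- Suppose on an interval J of energies one has, for every E ∈ J and every ω in a subshift Ω, uniformly hyperbolic Schrödinger cocycles with stable direction s(E,ω) ∈ ℝP¹ depending C¹ on E with C¹-norm bounded by M uniformly in ω. If ω ∈ Ω satisfies ω₀ = ⋯ = ω_{N−1} = i and E ↦ A^E_i is the elliptic one-step transfer matrix family on J (|E − v(i)| < 2 − δ on J), then s(E, T^N ω) = (A^E_i)^N · s(E, ω) as functions of E, and the C¹-norm in E of E ↦ (A^E_i)^N · s(E,ω) grows at least linearly in N (it is Θ(N)). Consequently, for N large enough (depending on M, δ, |J|), no such uniformly bounded C¹ family of stable directions can exist. -/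
open Real

/-- The left shift on bi-infinite sequences. -/
def shiftMap {A : Type*} (ω : ℤ → A) : ℤ → A := fun n => ω (n + 1)

private lemma shift_iter {A : Type*} (ω : ℤ → A) (k : ℕ) (n : ℤ) :
    shiftMap^[k] ω n = ω (n + k) := by
  induction k generalizing ω n with
  | zero => simp
  | succ k ih =>
    rw [Function.iterate_succ_apply, ih]
    show ω (n + k + 1) = ω (n + (k+1))
    congr 1; push_cast; ring

private lemma comp_eq {t x y z w c : ℝ}
    (h : (!![t, -1; 1, 0] : Matrix (Fin 2) (Fin 2) ℝ).mulVec ![x, y] = c • ![z, w]) :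
    t * x - y = c * z ∧ x = c * w := by
  have h0 := congr_fun h 0
  have h1 := congr_fun h 1
  simp [Matrix.mulVec, dotProduct, Fin.sum_univ_two] at h0 h1
  constructor <;> linarith

/-- one-step derivative relation for the projective action -/
private lemma deriv_step {vi E₀ Dθ Dφ c₀ : ℝ} {θ φ : ℝ → ℝ}
    (hθ : HasDerivAt θ Dθ E₀) (hφ : HasDerivAt φ Dφ E₀)
    (heq : ∀ᶠ E in nhds E₀,
      ((E - vi) * cos (θ E) - sin (θ E)) * sin (φ E) - cos (θ E) * cos (φ E) = 0)
    (hcu : (E₀ - vi) * cos (θ E₀) - sin (θ E₀) = c₀ * cos (φ E₀))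
    (hcw : cos (θ E₀) = c₀ * sin (φ E₀)) :
    c₀ ^ 2 * Dφ = Dθ - cos (θ E₀) ^ 2 := by
  have hcosθ : HasDerivAt (fun E => cos (θ E)) (-sin (θ E₀) * Dθ) E₀ := hθ.cos
  have hsinθ : HasDerivAt (fun E => sin (θ E)) (cos (θ E₀) * Dθ) E₀ := hθ.sin
  have hcosφ : HasDerivAt (fun E => cos (φ E)) (-sin (φ E₀) * Dφ) E₀ := hφ.cos
  have hsinφ : HasDerivAt (fun E => sin (φ E)) (cos (φ E₀) * Dφ) E₀ := hφ.sin
  have hu : HasDerivAt (fun E => (E - vi) * cos (θ E) - sin (θ E))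
      ((1 * cos (θ E₀) + (E₀ - vi) * (-sin (θ E₀) * Dθ)) - cos (θ E₀) * Dθ) E₀ :=
    (((hasDerivAt_id E₀).sub_const vi).mul hcosθ).sub hsinθ
  have hg : HasDerivAt (fun E => ((E - vi) * cos (θ E) - sin (θ E)) * sin (φ E)
        - cos (θ E) * cos (φ E))
      (((1 * cos (θ E₀) + (E₀ - vi) * (-sin (θ E₀) * Dθ)) - cos (θ E₀) * Dθ) * sin (φ E₀)
        + ((E₀ - vi) * cos (θ E₀) - sin (θ E₀)) * (cos (φ E₀) * Dφ)
        - ((-sin (θ E₀) * Dθ) * cos (φ E₀) + cos (θ E₀) * (-sin (φ E₀) * Dφ))) E₀ :=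
    (hu.mul hsinφ).sub (hcosθ.mul hcosφ)
  have hzero : HasDerivAt (fun _ : ℝ => (0:ℝ))
      (((1 * cos (θ E₀) + (E₀ - vi) * (-sin (θ E₀) * Dθ)) - cos (θ E₀) * Dθ) * sin (φ E₀)
        + ((E₀ - vi) * cos (θ E₀) - sin (θ E₀)) * (cos (φ E₀) * Dφ)
        - ((-sin (θ E₀) * Dθ) * cos (φ E₀) + cos (θ E₀) * (-sin (φ E₀) * Dφ))) E₀ :=
    hg.congr_of_eventuallyEq (by filter_upwards [heq] with E hE using hE.symm)
  have hd0 := hzero.unique (hasDerivAt_const E₀ 0)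
  have hpyθ := sin_sq_add_cos_sq (θ E₀)
  have hpyφ := sin_sq_add_cos_sq (φ E₀)
  linear_combination (norm := ring_nf) c₀ * hd0 + Dθ * hpyθ - c₀^2 * Dφ * hpyφ
    - Dφ * ((cos (θ E₀) + c₀ * sin (φ E₀)) * hcw
        + ((E₀ - vi) * cos (θ E₀) - sin (θ E₀) + c₀ * cos (φ E₀)) * hcu)
    + (cos (θ E₀) - (E₀ - vi) * sin (θ E₀) * Dθ - cos (θ E₀) * Dθ + cos (θ E₀) * Dφ) * hcw
    + (((E₀ - vi) * cos (θ E₀) - sin (θ E₀)) * Dφ + sin (θ E₀) * Dθ) * hcu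

private lemma csq_le {t Cθ Sθ Cφ Sφ c : ℝ} (ht : |t| ≤ 2)
    (hpyθ : Sθ^2 + Cθ^2 = 1) (hpyφ : Sφ^2 + Cφ^2 = 1)
    (hcu : t * Cθ - Sθ = c * Cφ) (hcw : Cθ = c * Sφ) : c^2 ≤ 10 := by
  obtain ⟨ht1, ht2⟩ := abs_le.1 ht
  have key : c^2 = (t * Cθ - Sθ)^2 + Cθ^2 := by
    have : c^2 * (Sφ^2 + Cφ^2) = (c*Cφ)^2 + (c*Sφ)^2 := by ring
    rw [hpyφ, ← hcu, ← hcw] at this; linarith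
  nlinarith [sq_nonneg (Cθ + Sθ), sq_nonneg (Cθ - Sθ), sq_nonneg Cθ, sq_nonneg Sθ,
    mul_nonneg (mul_nonneg (sub_nonneg.2 ht2) (sub_nonneg.2 (neg_le.1 ht1))) (sq_nonneg Cθ)]

private lemma pair_bound {t Cθ Sθ Cφ Sφ c : ℝ} (ht : |t| ≤ 2)
    (hpyθ : Sθ^2 + Cθ^2 = 1) (hpyφ : Sφ^2 + Cφ^2 = 1)
    (hcu : t * Cθ - Sθ = c * Cφ) (hcw : Cθ = c * Sφ) :
    1/100 ≤ Cθ^2 + Cφ^2 := by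
  rcases le_or_gt (1/100) (Cθ^2) with h | h
  · nlinarith [sq_nonneg Cφ]
  · have hc10 := csq_le ht hpyθ hpyφ hcu hcw
    obtain ⟨ht1, ht2⟩ := abs_le.1 ht
    have key : c^2 * Cφ^2 = (t * Cθ - Sθ)^2 := by rw [hcu]; ring
    nlinarith [sq_nonneg (t*Cθ - Sθ/2), sq_nonneg Cφ, sq_nonneg (t*Cθ - Sθ),
      mul_nonneg (mul_nonneg (sub_nonneg.2 ht2) (sub_nonneg.2 (neg_le.1 ht1))) (sq_nonneg Cθ),
      mul_le_mul_of_nonneg_right hc10 (sq_nonneg Cφ)]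

private noncomputable def xs (c θ : ℕ → ℝ) (k : ℕ) : ℝ :=
  (∏ j ∈ Finset.range k, c j) * Real.cos (θ k)
private noncomputable def ys (c θ : ℕ → ℝ) (k : ℕ) : ℝ :=
  (∏ j ∈ Finset.range k, c j) * Real.sin (θ k)
private noncomputable def ns (c θ : ℕ → ℝ) (k : ℕ) : ℝ := xs c θ k ^ 2 + ys c θ k ^ 2
private noncomputable def Qs (t : ℝ) (c θ : ℕ → ℝ) (k : ℕ) : ℝ :=
  ns c θ k + ns c θ (k+1) - t * (xs c θ k * xs c θ (k+1) + ys c θ k * ys c θ (k+1))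

private lemma ns_eq (c θ : ℕ → ℝ) (k : ℕ) :
    ns c θ k = (∏ j ∈ Finset.range k, c j)^2 := by
  simp only [ns, xs, ys]
  linear_combination ((∏ j ∈ Finset.range k, c j)^2) * (sin_sq_add_cos_sq (θ k))

private lemma ns_succ (c θ : ℕ → ℝ) (k : ℕ) :
    ns c θ (k+1) = (c k)^2 * ns c θ k := by
  rw [ns_eq, ns_eq, Finset.prod_range_succ]; ring

private lemma ns_nonneg (c θ : ℕ → ℝ) (k : ℕ) : 0 ≤ ns c θ k := by
  rw [ns_eq]; positivity
private lemma core (δ M t : ℝ) (hδ : 0 < δ) (hM : 0 < M) (ht : |t| ≤ 2 - δ)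
    (N : ℕ) (hN : 8800 * M * (δ + 44) / (δ * δ) + 3 ≤ (N : ℝ))
    (θ D c : ℕ → ℝ)
    (hDb : ∀ k, |D k| ≤ M)
    (hcomp : ∀ k, k < N → (t * Real.cos (θ k) - Real.sin (θ k) = c k * Real.cos (θ (k+1)) ∧
      Real.cos (θ k) = c k * Real.sin (θ (k+1))))
    (hrel : ∀ k, k < N → (c k)^2 * D (k+1) = D k - Real.cos (θ k)^2) : False := by
  have hfrac : (0:ℝ) ≤ 8800 * M * (δ + 44) / (δ * δ) := by positivity
  have hδ2 : δ ≤ 2 := by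
    rcases le_or_gt δ 2 with h | h
    · exact h
    · have := abs_nonneg t; linarith
  have hN3 : 3 ≤ N := by exact_mod_cast le_trans (by linarith : (3:ℝ) ≤ 8800 * M * (δ + 44) / (δ * δ) + 3) hN
  have ht2 : |t| ≤ 2 := by linarith
  obtain ⟨ht2l, ht2r⟩ := abs_le.1 ht2
  -- recurrences
  have hxy : ∀ k, k < N → xs c θ (k+1) = t * xs c θ k - ys c θ k ∧ ys c θ (k+1) = xs c θ k := by
    intro k hk
    obtain ⟨h1, h2⟩ := hcomp k hk
    constructor
    · simp only [xs, ys, Finset.prod_range_succ]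
      rw [mul_assoc, ← h1]; ring
    · simp only [xs, ys, Finset.prod_range_succ]
      rw [mul_assoc, ← h2]
  have hcsq : ∀ k, k < N → (c k)^2 ≤ 10 := by
    intro k hk
    obtain ⟨h1, h2⟩ := hcomp k hk
    exact csq_le ht2 (sin_sq_add_cos_sq (θ k)) (sin_sq_add_cos_sq (θ (k+1))) h1 h2
  -- invariant
  have hQstep : ∀ k, k + 1 < N → Qs t c θ (k+1) = Qs t c θ k := by
    intro k hk
    obtain ⟨ha1, ha2⟩ := hxy k (by omega)
    obtain ⟨hb1, hb2⟩ := hxy (k+1) hk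
    simp only [Qs, ns]
    rw [hb1, hb2, ha1, ha2]; ring
  have hQconst : ∀ k, k < N → Qs t c θ k = Qs t c θ 0 := by
    intro k
    induction k with
    | zero => intro _; rfl
    | succ k ih => intro hk; rw [hQstep k hk, ih (by omega)]
  -- generic quadratic bounds
  have habs : ∀ k, |xs c θ k * xs c θ (k+1) + ys c θ k * ys c θ (k+1)|
      ≤ (ns c θ k + ns c θ (k+1))/2 := by
    intro k
    rw [abs_le]; constructor
    · simp only [ns]
      nlinarith [sq_nonneg (xs c θ k + xs c θ (k+1)), sq_nonneg (ys c θ k + ys c θ (k+1))]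
    · simp only [ns]
      nlinarith [sq_nonneg (xs c θ k - xs c θ (k+1)), sq_nonneg (ys c θ k - ys c θ (k+1))]
  have hQlo : ∀ k, (1 - |t|/2) * (ns c θ k + ns c θ (k+1)) ≤ Qs t c θ k := by
    intro k
    have h1 : t * (xs c θ k * xs c θ (k+1) + ys c θ k * ys c θ (k+1))
        ≤ |t| * ((ns c θ k + ns c θ (k+1))/2) :=
      le_trans (le_abs_self _) (by rw [abs_mul]; exact mul_le_mul_of_nonneg_left (habs k) (abs_nonneg t))
    simp only [Qs]; linarith
  have hQhi : ∀ k, Qs t c θ k ≤ (1 + |t|/2) * (ns c θ k + ns c θ (k+1)) := by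
    intro k
    have h1 : -(t * (xs c θ k * xs c θ (k+1) + ys c θ k * ys c θ (k+1)))
        ≤ |t| * ((ns c θ k + ns c θ (k+1))/2) :=
      le_trans (neg_le_abs _)
        (by rw [abs_mul]; exact mul_le_mul_of_nonneg_left (habs k) (abs_nonneg t))
    simp only [Qs]; linarith
  have hn0 : ns c θ 0 = 1 := by rw [ns_eq]; simp
  have hn1 : ns c θ 1 ≤ 10 := by
    rw [ns_succ, hn0, mul_one]; exact hcsq 0 (by omega)
  have hnn := ns_nonneg c θ
  have hQ0hi : Qs t c θ 0 ≤ 22 := by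
    have := hQhi 0
    have habs0 := abs_nonneg t
    nlinarith [hnn 1]
  have hQ0lo : δ/2 ≤ Qs t c θ 0 := by
    have := hQlo 0
    nlinarith [hnn 1]
  -- n bounds for k < N
  have hnk_lo : ∀ k, k < N → δ/44 ≤ ns c θ k := by
    intro k hk
    have h1 : δ/2 ≤ Qs t c θ k := by rw [hQconst k hk]; exact hQ0lo
    have h2 := hQhi k
    have h3 : ns c θ (k+1) ≤ 10 * ns c θ k := by
      rw [ns_succ]; exact mul_le_mul_of_nonneg_right (hcsq k hk) (hnn k)
    nlinarith [hnn k, hnn (k+1)]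
  have hnk_hi : ∀ k, k < N → ns c θ k + ns c θ (k+1) ≤ 44/δ := by
    intro k hk
    have h1 : Qs t c θ k ≤ 22 := by rw [hQconst k hk]; exact hQ0hi
    have h2 := hQlo k
    rw [le_div_iff₀ hδ]
    nlinarith [hnn k, hnn (k+1)]
  have hnN_hi : ns c θ N ≤ 44/δ := by
    have := hnk_hi (N-1) (by omega)
    have hrw : N - 1 + 1 = N := by omega
    rw [hrw] at this
    linarith [hnn (N-1)]
  -- telescope
  have htel : ∀ k, k ≤ N →
      D 0 = (∑ j ∈ Finset.range k, ns c θ j * Real.cos (θ j)^2) + ns c θ k * D k := by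
    intro k
    induction k with
    | zero => intro _; simp [hn0]
    | succ k ih =>
      intro hk
      have hkN : k < N := by omega
      rw [Finset.sum_range_succ, ih (by omega), ns_succ]
      linear_combination (-(ns c θ k)) * hrel k hkN
  -- pair sum bound
  have hqsum : ∀ m, 2*m ≤ N → (m:ℝ)/100 ≤ ∑ j ∈ Finset.range (2*m), Real.cos (θ j)^2 := by
    intro m
    induction m with
    | zero => intro _; simp
    | succ m ih =>
      intro hm
      have h2m : 2 * m < N := by omega
      obtain ⟨h1, h2⟩ := hcomp (2*m) h2m
      have hpair := pair_bound ht2 (sin_sq_add_cos_sq (θ (2*m))) (sin_sq_add_cos_sq (θ (2*m+1))) h1 h2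
      have hrw : 2 * (m+1) = (2*m + 1) + 1 := by ring
      rw [hrw, Finset.sum_range_succ, Finset.sum_range_succ]
      have := ih (by omega)
      push_cast
      linarith
  -- assemble
  have hsum1 : (δ/44) * (∑ j ∈ Finset.range N, Real.cos (θ j)^2)
      ≤ ∑ j ∈ Finset.range N, ns c θ j * Real.cos (θ j)^2 := by
    rw [Finset.mul_sum]
    apply Finset.sum_le_sum
    intro j hj
    exact mul_le_mul_of_nonneg_right (hnk_lo j (Finset.mem_range.1 hj)) (sq_nonneg _)
  have hsum2 : ((N/2 : ℕ):ℝ)/100 ≤ ∑ j ∈ Finset.range N, Real.cos (θ j)^2 := by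
    refine le_trans (hqsum (N/2) (by omega)) ?_
    apply Finset.sum_le_sum_of_subset_of_nonneg
    · exact Finset.range_subset_range.2 (by omega)
    · intro j _ _; positivity
  have hND : ns c θ N * D N ≥ -(44/δ * M) := by
    have h1 : -M ≤ D N := (abs_le.1 (hDb N)).1
    nlinarith [hnn N, (le_div_iff₀ hδ).1 hnN_hi]
  have hD0 : D 0 ≤ M := (abs_le.1 (hDb 0)).2
  have hhalf : ((N:ℝ) - 1)/2 ≤ ((N/2 : ℕ):ℝ) := by
    have h1 : N ≤ 2 * (N/2) + 1 := by omega
    have h2 : (N:ℝ) ≤ 2 * ((N/2:ℕ):ℝ) + 1 := by exact_mod_cast h1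
    linarith
  have hfinal := htel N le_rfl
  have hmono : (δ/44) * (((N/2 : ℕ):ℝ)/100) ≤ (δ/44) * (∑ j ∈ Finset.range N, Real.cos (θ j)^2) :=
    mul_le_mul_of_nonneg_left hsum2 (by positivity)
  have hgoal : (δ/44) * (((N/2 : ℕ):ℝ)/100) ≤ M + 44/δ * M := by linarith
  have hδδ : (0:ℝ) < δ * δ := by positivity
  have hsmall : δ * δ * ((N/2 : ℕ):ℝ) ≤ 4400 * M * (δ + 44) := by
    have h1 := mul_le_mul_of_nonneg_left hgoal (le_of_lt hδ)
    have h2 : δ * ((δ/44) * (((N/2 : ℕ):ℝ)/100)) = δ * δ * ((N/2 : ℕ):ℝ) / 4400 := by ring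
    have h3 : δ * (M + 44/δ * M) = δ * M + 44 * M := by field_simp
    rw [h2, h3] at h1
    linarith
  have hbig : 8800 * M * (δ + 44) ≤ (δ*δ) * ((N:ℝ) - 3) := by
    rw [← div_le_iff₀' hδδ]
    linarith
  have hh2 : (δ*δ) * (((N:ℝ) - 1)/2) ≤ (δ*δ) * ((N/2 : ℕ):ℝ) :=
    mul_le_mul_of_nonneg_left hhalf (le_of_lt hδδ)
  linarith
/-- suppose on an interval `J = [a,b]` one has a stable-direction family
`s(E,ω)` (an angle lift), `C¹` in `E` with derivative bounded by `M` uniformly in `ω`, and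
equivariant under the Schrödinger cocycle. If `|E − v(i)| < 2 − δ` on `J`, then for any point
`ω` whose first `N` letters equal `i` the stable direction at `T^N ω` is the image of that at
`ω` under `(A^E_i)^N`; and for `N` large (depending on `M`, `δ`, `|J|`) no point of the subshift
can begin with `N` consecutive letters `i`. -/
theorem stmt_14 {A : Type*} [Fintype A]
    (Ω : Set (ℤ → A)) (hΩinv : ∀ ω ∈ Ω, shiftMap ω ∈ Ω)
    (v : A → ℝ) (i : A) (δ a b : ℝ) (hδ : 0 < δ) (hδ2 : δ < 2) (hab : a < b)
    (hJ : ∀ E ∈ Set.Icc a b, |E - v i| < 2 - δ)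
    (M : ℝ) (hM : 0 < M)
    (s s' : ℝ → (ℤ → A) → ℝ)
    (hderiv : ∀ ω ∈ Ω, ∀ E ∈ Set.Icc a b, HasDerivAt (fun E' => s E' ω) (s' E ω) E)
    (hbound : ∀ ω ∈ Ω, ∀ E ∈ Set.Icc a b, |s' E ω| ≤ M)
    (hequiv : ∀ ω ∈ Ω, ∀ E ∈ Set.Icc a b, ∃ c : ℝ, c ≠ 0 ∧
      (!![E - v (ω 0), -1; 1, 0] : Matrix (Fin 2) (Fin 2) ℝ).mulVec
          ![Real.cos (s E ω), Real.sin (s E ω)] =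
        c • ![Real.cos (s E (shiftMap ω)), Real.sin (s E (shiftMap ω))]) :
    (∀ N : ℕ, ∀ ω ∈ Ω, (∀ n : ℤ, 0 ≤ n → n < N → ω n = i) →
        ∀ E ∈ Set.Icc a b, ∃ c : ℝ, c ≠ 0 ∧
          ((!![E - v i, -1; 1, 0] : Matrix (Fin 2) (Fin 2) ℝ) ^ N).mulVec
              ![Real.cos (s E ω), Real.sin (s E ω)] =
            c • ![Real.cos (s E (shiftMap^[N] ω)), Real.sin (s E (shiftMap^[N] ω))]) ∧
      ∃ N₀ : ℕ, ∀ N ≥ N₀, ∀ ω ∈ Ω, ¬(∀ n : ℤ, 0 ≤ n → n < N → ω n = i) := by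
  constructor
  · -- Part 1: iterated equivariance
    intro N
    induction N with
    | zero =>
      intro ω hω hlet E hE
      exact ⟨1, one_ne_zero, by simp⟩
    | succ N ih =>
      intro ω hω hlet E hE
      have hω0 : ω 0 = i := hlet 0 le_rfl (by exact_mod_cast Nat.succ_pos N)
      obtain ⟨c₀, hc₀, h₀⟩ := hequiv ω hω E hE
      obtain ⟨c₁, hc₁, h₁⟩ := ih (shiftMap ω) (hΩinv ω hω)
        (fun n hn hnN => by
          show ω (n+1) = i
          exact hlet (n+1) (by omega) (by push_cast at hnN ⊢; omega)) E hE
      refine ⟨c₀ * c₁, mul_ne_zero hc₀ hc₁, ?_⟩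
      rw [pow_succ, ← Matrix.mulVec_mulVec, hω0] at *
      rw [h₀, Matrix.mulVec_smul, h₁, ← Function.iterate_succ_apply, smul_smul]
  · -- Part 2
    refine ⟨⌈8800 * M * (δ + 44) / (δ * δ) + 3⌉₊, ?_⟩
    intro N hN ω hω hlet
    have hE₀ : (a+b)/2 ∈ Set.Icc a b := ⟨by linarith, by linarith⟩
    have hmem : Set.Ioo a b ∈ nhds ((a+b)/2) :=
      isOpen_Ioo.mem_nhds ⟨by linarith, by linarith⟩
    have ht : |(a+b)/2 - v i| ≤ 2 - δ := le_of_lt (hJ _ hE₀)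
    have hωs : ∀ k : ℕ, shiftMap^[k] ω ∈ Ω := by
      intro k
      induction k with
      | zero => exact hω
      | succ k ih => rw [Function.iterate_succ_apply']; exact hΩinv _ ih
    have hωs0 : ∀ k : ℕ, k < N → (shiftMap^[k] ω) 0 = i := by
      intro k hk
      rw [shift_iter]
      exact hlet _ (by omega) (by exact_mod_cast (by omega : (0:ℤ) + k < (N:ℤ)))
    have hex : ∀ k : ℕ, ∃ cc : ℝ, k < N →
        ((((a+b)/2 - v i) * cos (s ((a+b)/2) (shiftMap^[k] ω))
            - sin (s ((a+b)/2) (shiftMap^[k] ω))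
            = cc * cos (s ((a+b)/2) (shiftMap^[k+1] ω)) ∧
          cos (s ((a+b)/2) (shiftMap^[k] ω))
            = cc * sin (s ((a+b)/2) (shiftMap^[k+1] ω))) ∧
          cc^2 * s' ((a+b)/2) (shiftMap^[k+1] ω)
            = s' ((a+b)/2) (shiftMap^[k] ω) - cos (s ((a+b)/2) (shiftMap^[k] ω))^2) := by
      intro k
      by_cases hk : k < N
      · have hsh : shiftMap (shiftMap^[k] ω) = shiftMap^[k+1] ω :=
          (Function.iterate_succ_apply' shiftMap k ω).symm
        obtain ⟨cc, hcc0, hcc⟩ := hequiv _ (hωs k) _ hE₀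
        rw [hωs0 k hk, hsh] at hcc
        obtain ⟨h1, h2⟩ := comp_eq hcc
        have heq : ∀ᶠ E in nhds ((a+b)/2),
            ((E - v i) * cos (s E (shiftMap^[k] ω)) - sin (s E (shiftMap^[k] ω)))
              * sin (s E (shiftMap^[k+1] ω))
            - cos (s E (shiftMap^[k] ω)) * cos (s E (shiftMap^[k+1] ω)) = 0 := by
          filter_upwards [hmem] with E hE
          obtain ⟨c', hc'0, hc'⟩ := hequiv _ (hωs k) E (Set.Ioo_subset_Icc_self hE)
          rw [hωs0 k hk, hsh] at hc'
          obtain ⟨g1, g2⟩ := comp_eq hc'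
          rw [g1, g2]; ring
        have hrelk := deriv_step (hderiv _ (hωs k) _ hE₀) (hderiv _ (hωs (k+1)) _ hE₀)
          heq h1 h2
        exact ⟨cc, fun _ => ⟨⟨h1, h2⟩, hrelk⟩⟩
      · exact ⟨1, fun h => absurd h hk⟩
    choose cf hcf using hex
    refine core δ M ((a+b)/2 - v i) hδ hM ht N ?_
      (fun k => s ((a+b)/2) (shiftMap^[k] ω)) (fun k => s' ((a+b)/2) (shiftMap^[k] ω)) cf
      (fun k => hbound _ (hωs k) _ hE₀)
      (fun k hk => (hcf k hk).1) (fun k hk => (hcf k hk).2)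
    calc 8800 * M * (δ + 44) / (δ * δ) + 3
        ≤ (⌈8800 * M * (δ + 44) / (δ * δ) + 3⌉₊ : ℝ) := Nat.le_ceil _
      _ ≤ (N:ℝ) := Nat.cast_le.2 hN
end
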